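/- arXiv:2503.23143 — 6 statements merged into one kernel-verified Lean document; each statement's English description precedes it below -/
import Mathlib

section
/- Let (Ω, μ) be a finite measure space. For each n ∈ ℕ let g_n : Ω → ℝ be integrable with g_n(x) > 0 for μ-a.e. x, and let h : Ω → ℝ be integrable such that ∫_Ω φ·g_n dμ → ∫_Ω φ·h dμ for every bounded measurable φ : Ω → ℝ. Let γ : ℝ → ℝ be Borel measurable with γ(t) ≥ 0 for all t > 0 and γ(t) → +∞ as t → 0⁺, and suppose sup_n ∫_Ω γ(g_n(x)) dμ(x) < +∞. Then h(x) > 0 for μ-a.e. x ∈ Ω. -/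
open MeasureTheory Filter Topology
open scoped ENNReal

/-!
On `Z = {h ≤ 0}`, testing against `1_Z` gives `0 ≤ ∫_Z g n → ∫_Z h ≤ 0`, so `g n → 0` in
`L¹(Z)` and a subsequence tends to `0` a.e. on `Z`. Along it `γ (g n) → ∞` a.e. on `Z`, and
Fatou's lemma against the uniform bound on `∫ γ (g n)` forces `μ Z = 0`.
-/

namespace MeasureTheory

variable {α : Type*} [MeasurableSpace α] {μ : Measure α}

theorem tendsto_setIntegral_of_tendsto_integral_mul_bounded {g : ℕ → α → ℝ} {h : α → ℝ}
    (hconv : ∀ φ : α → ℝ, Measurable φ → (∃ M : ℝ, ∀ x, |φ x| ≤ M) →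
      Tendsto (fun n => ∫ x, φ x * g n x ∂μ) atTop (𝓝 (∫ x, φ x * h x ∂μ)))
    {s : Set α} (hs : MeasurableSet s) :
    Tendsto (fun n => ∫ x in s, g n x ∂μ) atTop (𝓝 (∫ x in s, h x ∂μ)) := by
  have hφ_mul : ∀ u : α → ℝ, (fun x => s.indicator 1 x * u x) = s.indicator u := fun u => by
    ext x
    by_cases hx : x ∈ s <;> simp [hx]
  have hφ_bdd : ∀ x, |s.indicator (1 : α → ℝ) x| ≤ 1 := fun x => by
    by_cases hx : x ∈ s <;> simp [hx]
  simpa only [hφ_mul, integral_indicator hs] using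
    hconv _ (measurable_one.indicator hs) ⟨1, hφ_bdd⟩

theorem exists_seq_tendsto_ae_zero_of_tendsto_integral {f : ℕ → α → ℝ}
    (hf_int : ∀ n, Integrable (f n) μ) (hf_nonneg : ∀ n, 0 ≤ᵐ[μ] f n)
    (hf : Tendsto (fun n => ∫ x, f n x ∂μ) atTop (𝓝 0)) :
    ∃ ns : ℕ → ℕ, StrictMono ns ∧ ∀ᵐ x ∂μ, Tendsto (fun k => f (ns k) x) atTop (𝓝 0) := by
  have hf_eLpNorm : ∀ n, eLpNorm (f n - 0) 1 μ = ENNReal.ofReal (∫ x, f n x ∂μ) := fun n => by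
    rw [sub_zero, eLpNorm_one_eq_lintegral_enorm,
      ← ofReal_integral_norm_eq_lintegral_enorm (hf_int n)]
    congr 1
    exact integral_congr_ae <| (hf_nonneg n).mono fun x hx => Real.norm_of_nonneg hx
  have h_inMeasure : TendstoInMeasure μ f atTop 0 := by
    refine tendstoInMeasure_of_tendsto_eLpNorm one_ne_zero
      (fun n => (hf_int n).aestronglyMeasurable) aestronglyMeasurable_zero ?_
    simpa only [hf_eLpNorm, ENNReal.ofReal_zero] using ENNReal.tendsto_ofReal hf
  exact h_inMeasure.exists_seq_tendsto_ae

theorem Measure.eq_zero_of_tendsto_top_of_lintegral_le {ι : Type*} {u : Filter ι}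
    [u.NeBot] [u.IsCountablyGenerated] {f : ι → α → ℝ≥0∞} {C : ℝ≥0∞}
    (hf_meas : ∀ i, AEMeasurable (f i) μ) (hC : C ≠ ∞) (hf_le : ∀ i, ∫⁻ x, f i x ∂μ ≤ C)
    (hf_top : ∀ᵐ x ∂μ, Tendsto (fun i => f i x) u (𝓝 ∞)) : μ = 0 := by
  have h_liminf : ∫⁻ x, liminf (fun i => f i x) u ∂μ = ∞ * μ Set.univ := by
    rw [lintegral_congr_ae (hf_top.mono fun x hx => hx.liminf_eq), lintegral_const]
  have h_top_mul : ∞ * μ Set.univ ≤ C :=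
    h_liminf ▸ (lintegral_liminf_le' hf_meas).trans
      (liminf_le_of_frequently_le' (Frequently.of_forall hf_le))
  by_contra hμ
  exact hC (top_le_iff.1 (ENNReal.top_mul (Measure.measure_univ_ne_zero.2 hμ) ▸ h_top_mul))

end MeasureTheory

theorem weak_limit_of_jacobians_pos_general {Ω : Type*} [MeasurableSpace Ω] (μ : Measure Ω)
    (g : ℕ → Ω → ℝ) (h : Ω → ℝ) (γ : ℝ → ℝ)
    (hg_int : ∀ n, Integrable (g n) μ)
    (hg_pos : ∀ n, ∀ᵐ x ∂μ, 0 < g n x)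
    (hh_int : Integrable h μ)
    (hconv : ∀ φ : Ω → ℝ, Measurable φ → (∃ M : ℝ, ∀ x, |φ x| ≤ M) →
      Tendsto (fun n => ∫ x, φ x * g n x ∂μ) atTop (𝓝 (∫ x, φ x * h x ∂μ)))
    (hγ_meas : Measurable γ)
    (hγ_blow : Tendsto γ (nhdsWithin 0 (Set.Ioi 0)) atTop)
    (hbound : ∃ C : ℝ≥0∞, C < ⊤ ∧ ∀ n, ∫⁻ x, ENNReal.ofReal (γ (g n x)) ∂μ ≤ C) :
    ∀ᵐ x ∂μ, 0 < h x := by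
  obtain ⟨C, hC, hγg_le⟩ := hbound
  set Z := {x | hh_int.1.mk h x ≤ 0}
  have hZ : MeasurableSet Z := measurableSet_le hh_int.1.measurable_mk measurable_const
  have hh_nonpos : ∫ x in Z, h x ∂μ ≤ 0 := by
    rw [integral_congr_ae (ae_restrict_of_ae hh_int.1.ae_eq_mk)]
    exact setIntegral_nonpos hZ fun _ hx => hx
  have hgZ_nonneg : ∀ n, 0 ≤ᵐ[μ.restrict Z] g n :=
    fun n => ae_restrict_of_ae <| (hg_pos n).mono fun _ hx => hx.le
  have hgZ_lim := tendsto_setIntegral_of_tendsto_integral_mul_bounded hconv hZ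
  have hgZ_zero : Tendsto (fun n => ∫ x in Z, g n x ∂μ) atTop (𝓝 0) := by
    rwa [le_antisymm hh_nonpos
      (ge_of_tendsto' hgZ_lim fun n => integral_nonneg_of_ae (hgZ_nonneg n))] at hgZ_lim
  obtain ⟨ns, -, hns⟩ := exists_seq_tendsto_ae_zero_of_tendsto_integral
    (fun n => (hg_int n).restrict) hgZ_nonneg hgZ_zero
  have hγg_top : ∀ᵐ x ∂μ.restrict Z,
      Tendsto (fun k => ENNReal.ofReal (γ (g (ns k) x))) atTop (𝓝 ∞) := by
    filter_upwards [hns, ae_restrict_of_ae (ae_all_iff.2 hg_pos)] with x hx hpos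
    exact ENNReal.tendsto_ofReal_atTop.comp <|
      hγ_blow.comp (tendsto_nhdsWithin_iff.2 ⟨hx, .of_forall fun k => hpos (ns k)⟩)
  have hZ_null : μ Z = 0 := Measure.restrict_eq_zero.1 <|
    Measure.eq_zero_of_tendsto_top_of_lintegral_le
      (fun k => (hγ_meas.comp_aemeasurable (hg_int (ns k)).aemeasurable.restrict).ennreal_ofReal)
      hC.ne (fun k => (setLIntegral_le_lintegral Z _).trans (hγg_le (ns k))) hγg_top
  filter_upwards [measure_eq_zero_iff_ae_notMem.1 hZ_null, hh_int.1.ae_eq_mk] with x hx hx_eq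
  exact hx_eq ▸ not_le.1 hx

/-- If `g n → h` weakly in `L¹(μ)` (tested against bounded measurable functions), each `g n`
is a.e. positive, and `∫ γ(g n) dμ` is uniformly bounded for a Borel function `γ ≥ 0` on
`(0,∞)` blowing up at `0⁺`, then `h > 0` a.e. -/
theorem weak_limit_of_jacobians_pos {Ω : Type*} [MeasurableSpace Ω] (μ : Measure Ω)
    [IsFiniteMeasure μ] (g : ℕ → Ω → ℝ) (h : Ω → ℝ) (γ : ℝ → ℝ)
    (hg_int : ∀ n, Integrable (g n) μ)
    (hg_pos : ∀ n, ∀ᵐ x ∂μ, 0 < g n x)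
    (hh_int : Integrable h μ)
    (hconv : ∀ φ : Ω → ℝ, Measurable φ → (∃ M : ℝ, ∀ x, |φ x| ≤ M) →
      Tendsto (fun n => ∫ x, φ x * g n x ∂μ) atTop (𝓝 (∫ x, φ x * h x ∂μ)))
    (hγ_meas : Measurable γ)
    (hγ_nonneg : ∀ t : ℝ, 0 < t → 0 ≤ γ t)
    (hγ_blow : Tendsto γ (nhdsWithin 0 (Set.Ioi 0)) atTop)
    (hbound : ∃ C : ℝ≥0∞, C < ⊤ ∧ ∀ n, ∫⁻ x, ENNReal.ofReal (γ (g n x)) ∂μ ≤ C) :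
    ∀ᵐ x ∂μ, 0 < h x :=
  weak_limit_of_jacobians_pos_general μ g h γ hg_int hg_pos hh_int hconv hγ_meas hγ_blow hbound
end

section
/- Let Ω ⊆ ℝ^N be a bounded open set and y : Ω → ℝ^N be injective and differentiable at every point of Ω with det Dy(x) > 0 for all x ∈ Ω; denote by y⁻¹ : y(Ω) → Ω the inverse of y on its image. Suppose that x ↦ adj Dy(x) is integrable on Ω, and let ψ : ℝ^N → ℝ be bounded and continuous. Then ξ ↦ ψ(ξ)·(Dy(y⁻¹(ξ)))⁻¹ is integrable on y(Ω) and ∫_{y(Ω)} ψ(ξ)·(Dy(y⁻¹(ξ)))⁻¹ dξ = ∫_Ω ψ(y(x))·adj Dy(x) dx, as an identity between N×N matrices of real numbers. -/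
open MeasureTheory Filter Topology
open scoped ENNReal

/-! The change of variables `ξ = y x` turns `∫_{y(Ω)} g` into `∫_Ω det Dy(x) · g(y x)`, and for
`g ξ = ψ ξ · (Dy(y⁻¹ ξ))⁻¹` the integrand becomes `ψ(y x) · det Dy(x) · Dy(x)⁻¹ = ψ(y x) · adj Dy(x)`,
which is integrable because `ψ` is bounded and `adj Dy` is integrable. -/

theorem Matrix.det_mulVecLin_toContinuousLinearMap {ι : Type*} [Fintype ι] [DecidableEq ι]
    (A : Matrix ι ι ℝ) : (A.mulVecLin.toContinuousLinearMap).det = A.det := by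
  rw [LinearMap.det_toContinuousLinearMap, ← Matrix.toLin'_apply', LinearMap.det_toLin']

theorem Matrix.det_mul_inv_apply {K ι : Type*} [Field K] [Fintype ι] [DecidableEq ι]
    (A : Matrix ι ι K) (h : A.det ≠ 0) (i j : ι) : A.det * A⁻¹ i j = A.adjugate i j := by
  rw [Matrix.inv_def, Ring.inverse_eq_inv, Matrix.smul_apply, smul_eq_mul, ← mul_assoc,
    mul_inv_cancel₀ h, one_mul]

section ChangeOfVariables

variable {ι E : Type*} [Fintype ι] [DecidableEq ι] [NormedAddCommGroup E] [NormedSpace ℝ E]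
  {Ω : Set (ι → ℝ)} {y : (ι → ℝ) → (ι → ℝ)} {F : (ι → ℝ) → Matrix ι ι ℝ}

theorem integrableOn_image_iff_integrableOn_det_smul_of_det_pos (hΩ : MeasurableSet Ω)
    (hinj : Set.InjOn y Ω)
    (hdiff : ∀ x ∈ Ω, HasFDerivWithinAt y (F x).mulVecLin.toContinuousLinearMap Ω x)
    (hdet : ∀ x ∈ Ω, 0 < (F x).det) (g : (ι → ℝ) → E) :
    IntegrableOn g (y '' Ω) ↔ IntegrableOn (fun x => (F x).det • g (y x)) Ω := by
  rw [integrableOn_image_iff_integrableOn_abs_det_fderiv_smul volume hΩ hdiff hinj g]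
  refine integrableOn_congr_fun (fun x hx => ?_) hΩ
  rw [Matrix.det_mulVecLin_toContinuousLinearMap, abs_of_pos (hdet x hx)]

theorem integral_image_eq_integral_det_smul_of_det_pos (hΩ : MeasurableSet Ω)
    (hinj : Set.InjOn y Ω)
    (hdiff : ∀ x ∈ Ω, HasFDerivWithinAt y (F x).mulVecLin.toContinuousLinearMap Ω x)
    (hdet : ∀ x ∈ Ω, 0 < (F x).det) (g : (ι → ℝ) → E) :
    ∫ ξ in y '' Ω, g ξ = ∫ x in Ω, (F x).det • g (y x) := by
  rw [integral_image_eq_integral_abs_det_fderiv_smul volume hΩ hdiff hinj g]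
  refine setIntegral_congr_fun hΩ (fun x hx => ?_)
  rw [Matrix.det_mulVecLin_toContinuousLinearMap, abs_of_pos (hdet x hx)]

end ChangeOfVariables

theorem integral_inverse_gradient_eq_integral_adjugate_general {N : ℕ} (Ω : Set (Fin N → ℝ))
    (hΩo : IsOpen Ω)
    (y : (Fin N → ℝ) → (Fin N → ℝ)) (hinj : Set.InjOn y Ω)
    (F : (Fin N → ℝ) → Matrix (Fin N) (Fin N) ℝ)
    (hdiff : ∀ x ∈ Ω, HasFDerivAt y ((F x).mulVecLin.toContinuousLinearMap) x)
    (hdet : ∀ x ∈ Ω, 0 < (F x).det)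
    (hadj : ∀ i j, IntegrableOn (fun x => (F x).adjugate i j) Ω)
    (ψ : (Fin N → ℝ) → ℝ) (hψc : Continuous ψ) (hψb : ∃ M : ℝ, ∀ ξ, |ψ ξ| ≤ M) :
    ∀ i j,
      IntegrableOn (fun ξ => ψ ξ * (F (Function.invFunOn y Ω ξ))⁻¹ i j) (y '' Ω) ∧
      ∫ ξ in y '' Ω, ψ ξ * (F (Function.invFunOn y Ω ξ))⁻¹ i j =
        ∫ x in Ω, ψ (y x) * (F x).adjugate i j := by
  intro i j
  have hΩ : MeasurableSet Ω := hΩo.measurableSet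
  have hdiffΩ x (hx : x ∈ Ω) := (hdiff x hx).hasFDerivWithinAt (s := Ω)
  have hpullback : ∀ x ∈ Ω, (F x).det • (ψ (y x) * (F (Function.invFunOn y Ω (y x)))⁻¹ i j) =
      ψ (y x) * (F x).adjugate i j := fun x hx => by
    rw [hinj.leftInvOn_invFunOn hx, smul_eq_mul, mul_left_comm,
      Matrix.det_mul_inv_apply _ (hdet x hx).ne']
  obtain ⟨M, hM⟩ := hψb
  have hψy : AEStronglyMeasurable (fun x => ψ (y x)) (volume.restrict Ω) :=
    (hψc.comp_continuousOn fun x hx => (hdiff x hx).continuousAt.continuousWithinAt)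
      |>.aestronglyMeasurable hΩ
  have hintegrable : IntegrableOn (fun x => ψ (y x) * (F x).adjugate i j) Ω :=
    (hadj i j).bdd_mul hψy (.of_forall fun x => hM (y x))
  refine ⟨?_, ?_⟩
  · rw [integrableOn_image_iff_integrableOn_det_smul_of_det_pos hΩ hinj hdiffΩ hdet]
    exact hintegrable.congr_fun (fun x hx => (hpullback x hx).symm) hΩ
  · rw [integral_image_eq_integral_det_smul_of_det_pos hΩ hinj hdiffΩ hdet]
    exact setIntegral_congr_fun hΩ hpullback

/-- For an injective deformation `y` on a bounded open set `Ω`, everywhere differentiable with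
positive Jacobian determinant and integrable cofactor (adjugate) matrix, and any bounded
continuous `ψ : ℝ^N → ℝ`, the function `ξ ↦ ψ(ξ) (Dy(y⁻¹ ξ))⁻¹` is integrable on `y(Ω)` and
`∫_{y(Ω)} ψ(ξ) (Dy(y⁻¹ ξ))⁻¹ dξ = ∫_Ω ψ(y x) adj Dy(x) dx`, entrywise. -/
theorem integral_inverse_gradient_eq_integral_adjugate {N : ℕ} (Ω : Set (Fin N → ℝ))
    (hΩo : IsOpen Ω) (hΩb : Bornology.IsBounded Ω)
    (y : (Fin N → ℝ) → (Fin N → ℝ)) (hinj : Set.InjOn y Ω)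
    (F : (Fin N → ℝ) → Matrix (Fin N) (Fin N) ℝ)
    (hdiff : ∀ x ∈ Ω, HasFDerivAt y ((F x).mulVecLin.toContinuousLinearMap) x)
    (hdet : ∀ x ∈ Ω, 0 < (F x).det)
    (hadj : ∀ i j, IntegrableOn (fun x => (F x).adjugate i j) Ω)
    (ψ : (Fin N → ℝ) → ℝ) (hψc : Continuous ψ) (hψb : ∃ M : ℝ, ∀ ξ, |ψ ξ| ≤ M) :
    ∀ i j,
      IntegrableOn (fun ξ => ψ ξ * (F (Function.invFunOn y Ω ξ))⁻¹ i j) (y '' Ω) ∧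
      ∫ ξ in y '' Ω, ψ ξ * (F (Function.invFunOn y Ω ξ))⁻¹ i j =
        ∫ x in Ω, ψ (y x) * (F x).adjugate i j :=
  integral_inverse_gradient_eq_integral_adjugate_general Ω hΩo y hinj F hdiff hdet hadj ψ hψc hψb
end

section
/- Let Ω ⊆ ℝ^N be a bounded measurable set. Let v_n, v : Ω → ℝ^{N×N} be integrable with ∫_Ω φ·v_n dx → ∫_Ω φ·v dx for every essentially bounded measurable φ : Ω → ℝ; let y_n, y : Ω → ℝ^N be measurable with y_n → y almost everywhere in Ω; and let ψ : ℝ^N → ℝ be bounded and continuous. Then ∫_Ω ψ(y_n(x))·v_n(x) dx → ∫_Ω ψ(y(x))·v(x) dx, as a limit of N×N matrices with entrywise integrals. -/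
/-!
A weakly convergent sequence in `L¹` is uniformly integrable. This is the Vitali–Hahn–Saks
argument: on the closed, hence complete, set of `[0, 1]`-valued functions in `L¹` every
`g ↦ ∫ g vₙ` is continuous, so by Baire's theorem the Cauchy condition for `∫ g vₙ` holds uniformly
on some ball; moving the centre of that ball up to `1` and down to `0` on a set `B` of small
measure then controls `∫_B vₙ` uniformly in `n`. A bounded set is covered by finitely many sets of
small measure, so the `L¹` norms are bounded as well.

Now split `∫ ψ(yₙ) vₙ = ∫ (ψ(yₙ) - ψ(y)) vₙ + ∫ ψ(y) vₙ`. The second term converges by weak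
convergence. By Egorov's theorem `ψ(yₙ) → ψ(y)` uniformly off a set of small measure; on that set
uniform integrability makes the first term small, and off it the `L¹` bound does.
-/

open MeasureTheory Filter Topology Set
open scoped ENNReal NNReal

variable {α : Type*} [MeasurableSpace α] {μ : Measure α}

lemma tendsto_integral_mul_of_tendsto_Lp_one {w : α → ℝ} (hw : Integrable w μ)
    {g : ℕ → Lp ℝ 1 μ} {g₀ : Lp ℝ 1 μ} {C : ℝ} (hgC : ∀ k, ∀ᵐ x ∂μ, |g k x| ≤ C)
    (hg : Tendsto g atTop (𝓝 g₀)) :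
    Tendsto (fun k => ∫ x, g k x * w x ∂μ) atTop (𝓝 (∫ x, g₀ x * w x ∂μ)) := by
  refine tendsto_of_subseq_tendsto fun ns hns => ?_
  obtain ⟨ms, -, hms⟩ := (tendstoInMeasure_of_tendsto_Lp (hg.comp hns)).exists_seq_tendsto_ae
  refine ⟨ms, tendsto_integral_of_dominated_convergence (fun x => C * |w x|)
    (fun k => (Lp.aestronglyMeasurable _).mul hw.1) (hw.abs.const_mul C) (fun k => ?_) ?_⟩
  · filter_upwards [hgC (ns (ms k))] with x hx
    rw [norm_mul, Real.norm_eq_abs, Real.norm_eq_abs]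
    exact mul_le_mul_of_nonneg_right hx (abs_nonneg _)
  · filter_upwards [hms] with x hx
    exact hx.mul_const _

section UnitInterval

variable [IsFiniteMeasure μ]

variable (μ) in
def unitIntervalL1 : Set (Lp ℝ 1 μ) := Icc 0 (Lp.const 1 μ 1)

lemma ae_mem_Icc_of_mem_unitIntervalL1 {g : Lp ℝ 1 μ} (hg : g ∈ unitIntervalL1 μ) :
    ∀ᵐ x ∂μ, g x ∈ Icc (0 : ℝ) 1 := by
  filter_upwards [(Lp.coeFn_nonneg g).2 hg.1, (Lp.coeFn_le g _).2 hg.2, Lp.coeFn_const (p := 1)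
    (μ := μ) (1 : ℝ)] with x h0 h1 hc
  exact ⟨h0, h1.trans_eq hc⟩

lemma indicatorConstLp_one_mem_unitIntervalL1 {s : Set α} (hs : MeasurableSet s) :
    indicatorConstLp 1 hs (measure_ne_top μ s) (1 : ℝ) ∈ unitIntervalL1 μ := by
  have h := indicatorConstLp_coeFn (p := 1) (hs := hs) (hμs := measure_ne_top μ s) (c := (1 : ℝ))
  refine ⟨(Lp.coeFn_nonneg _).1 ?_, (Lp.coeFn_le _ _).1 ?_⟩
  · filter_upwards [h] with x hx
    rw [hx]
    exact indicator_nonneg (fun _ _ => zero_le_one) x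
  · filter_upwards [h, Lp.coeFn_const (p := 1) (μ := μ) (1 : ℝ)] with x hx hc
    rw [hx, hc]
    exact indicator_le_self' (fun _ _ => zero_le_one) x

lemma ae_abs_le_one_of_mem_unitIntervalL1 {g : Lp ℝ 1 μ} (hg : g ∈ unitIntervalL1 μ) :
    ∀ᵐ x ∂μ, |g x| ≤ 1 := by
  filter_upwards [ae_mem_Icc_of_mem_unitIntervalL1 hg] with x hx
  exact abs_le.2 ⟨by linarith [hx.1], hx.2⟩

lemma integrable_mul_of_mem_unitIntervalL1 {w : α → ℝ} (hw : Integrable w μ) {g : Lp ℝ 1 μ}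
    (hg : g ∈ unitIntervalL1 μ) : Integrable (fun x => g x * w x) μ :=
  hw.bdd_mul (Lp.aestronglyMeasurable g) (ae_abs_le_one_of_mem_unitIntervalL1 hg)

lemma continuous_integral_mul_unitIntervalL1 {w : α → ℝ} (hw : Integrable w μ) :
    Continuous fun g : unitIntervalL1 μ => ∫ x, (g : Lp ℝ 1 μ) x * w x ∂μ := by
  refine continuous_iff_seqContinuous.2 fun g g₀ hg => ?_
  exact tendsto_integral_mul_of_tendsto_Lp_one hw
    (fun k => ae_abs_le_one_of_mem_unitIntervalL1 (g k).2)
    ((continuous_subtype_val.tendsto _).comp hg)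

lemma exists_mem_unitIntervalL1_sub_ae_eq_indicator {g₀ : Lp ℝ 1 μ} (hg₀ : g₀ ∈ unitIntervalL1 μ)
    {B : Set α} (hB : MeasurableSet B) :
    ∃ g₁ ∈ unitIntervalL1 μ, ∃ g₂ ∈ unitIntervalL1 μ,
      dist g₁ g₀ ≤ μ.real B ∧ dist g₂ g₀ ≤ μ.real B ∧
      ⇑g₁ - ⇑g₂ =ᵐ[μ] B.indicator 1 := by
  set χ := indicatorConstLp 1 hB (measure_ne_top μ B) (1 : ℝ)
  set χc := indicatorConstLp 1 hB.compl (measure_ne_top μ Bᶜ) (1 : ℝ)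
  have hχ := indicatorConstLp_one_mem_unitIntervalL1 (μ := μ) hB
  have hχc := indicatorConstLp_one_mem_unitIntervalL1 (μ := μ) hB.compl
  have hχB : ‖χ‖ = μ.real B := by
    simp [χ, norm_indicatorConstLp one_ne_zero ENNReal.one_ne_top]
  have hpt : ∀ᵐ x ∂μ, g₀ x ∈ Icc (0 : ℝ) 1 ∧ χ x = B.indicator 1 x ∧ χc x = Bᶜ.indicator 1 x :=
    (ae_mem_Icc_of_mem_unitIntervalL1 hg₀).and (indicatorConstLp_coeFn.and indicatorConstLp_coeFn)
  refine ⟨g₀ ⊔ χ, ⟨le_sup_of_le_left hg₀.1, sup_le hg₀.2 hχ.2⟩,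
    g₀ ⊓ χc, ⟨le_inf hg₀.1 hχc.1, inf_le_of_left_le hg₀.2⟩, ?_, ?_, ?_⟩
  · rw [dist_eq_norm, ← hχB]
    refine Lp.norm_le_norm_of_ae_le ?_
    filter_upwards [hpt, Lp.coeFn_sub (g₀ ⊔ χ) g₀, Lp.coeFn_sup g₀ χ] with x ⟨h0, hχx, _⟩ hs hm
    rw [hs, Pi.sub_apply, hm, Pi.sup_apply, hχx]
    by_cases hx : x ∈ B <;> simp [hx, abs_le, h0.1, h0.2]
    linarith [h0.2]
  · rw [dist_eq_norm, ← hχB]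
    refine Lp.norm_le_norm_of_ae_le ?_
    filter_upwards [hpt, Lp.coeFn_sub (g₀ ⊓ χc) g₀, Lp.coeFn_inf g₀ χc] with x ⟨h0, hχx, hχcx⟩ hs hm
    rw [hs, Pi.sub_apply, hm, Pi.inf_apply, hχcx, hχx]
    by_cases hx : x ∈ B <;> simp [hx, abs_le, h0.1, h0.2]
    linarith [h0.1]
  · filter_upwards [hpt, Lp.coeFn_sup g₀ χ, Lp.coeFn_inf g₀ χc] with x ⟨h0, hχx, hχcx⟩ hs hi
    rw [Pi.sub_apply, hs, hi, Pi.sup_apply, Pi.inf_apply, hχx, hχcx]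
    by_cases hx : x ∈ B <;> simp [hx, h0.1, h0.2]

theorem exists_abs_setIntegral_sub_le_of_tendsto_integral_mul {w : ℕ → α → ℝ}
    (hw : ∀ n, Integrable (w n) μ)
    (hweak : ∀ φ : α → ℝ, Measurable φ → (∃ M, ∀ᵐ x ∂μ, |φ x| ≤ M) →
      ∃ c, Tendsto (fun n => ∫ x, φ x * w n x ∂μ) atTop (𝓝 c))
    {ε : ℝ} (hε : 0 < ε) :
    ∃ K, ∃ δ > 0, ∀ n ≥ K, ∀ B, MeasurableSet B → μ B ≤ ENNReal.ofReal δ →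
      |∫ x in B, w n x ∂μ - ∫ x in B, w K x ∂μ| ≤ 2 * ε := by
  set S := unitIntervalL1 μ
  set Λ : ℕ → S → ℝ := fun n g => ∫ x, (g : Lp ℝ 1 μ) x * w n x ∂μ
  have h0S : (0 : Lp ℝ 1 μ) ∈ S := by
    simpa using indicatorConstLp_one_mem_unitIntervalL1 (μ := μ) MeasurableSet.empty
  have : Nonempty S := ⟨⟨0, h0S⟩⟩
  have : CompleteSpace S := isClosed_Icc.completeSpace_coe
  set F : ℕ → Set S := fun k => {g | ∀ n ≥ k, |Λ n g - Λ k g| ≤ ε}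
  have hFclosed : ∀ k, IsClosed (F k) := fun k => by
    simp only [F, ofPred_forall]
    exact isClosed_iInter fun n => isClosed_iInter fun _ => isClosed_le
      ((continuous_integral_mul_unitIntervalL1 (hw n)).sub
        (continuous_integral_mul_unitIntervalL1 (hw k))).abs continuous_const
  have hFcover : ⋃ k, F k = univ := by
    refine eq_univ_of_forall fun g => mem_iUnion.2 ?_
    obtain ⟨c, hc⟩ := hweak _ (Lp.stronglyMeasurable _).measurable
      ⟨1, ae_abs_le_one_of_mem_unitIntervalL1 g.2⟩
    obtain ⟨k, hk⟩ := Metric.cauchySeq_iff'.1 hc.cauchySeq ε hε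
    exact ⟨k, fun n hn => (hk n hn).le⟩
  obtain ⟨K, g₀, hg₀⟩ := nonempty_interior_of_iUnion_of_closed hFclosed hFcover
  obtain ⟨r, hr, hball⟩ := Metric.mem_nhds_iff.1 (mem_interior_iff_mem_nhds.1 hg₀)
  refine ⟨K, r / 2, half_pos hr, fun n hn B hB hμB => ?_⟩
  obtain ⟨g₁, hg₁, g₂, hg₂, hd₁, hd₂, hdiff⟩ :=
    exists_mem_unitIntervalL1_sub_ae_eq_indicator g₀.2 hB
  have hμB' : μ.real B < r :=
    (ENNReal.toReal_le_of_le_ofReal (half_pos hr).le hμB).trans_lt (half_lt_self hr)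
  have hF₁ : ⟨g₁, hg₁⟩ ∈ F K := hball (hd₁.trans_lt hμB')
  have hF₂ : ⟨g₂, hg₂⟩ ∈ F K := hball (hd₂.trans_lt hμB')
  have hΛ : ∀ m, Λ m ⟨g₁, hg₁⟩ - Λ m ⟨g₂, hg₂⟩ = ∫ x in B, w m x ∂μ := fun m => by
    rw [← integral_sub (integrable_mul_of_mem_unitIntervalL1 (hw m) hg₁)
      (integrable_mul_of_mem_unitIntervalL1 (hw m) hg₂), ← integral_indicator hB]
    refine integral_congr_ae ?_
    filter_upwards [hdiff] with x hx
    rw [← sub_mul, ← Pi.sub_apply, hx]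
    by_cases hxB : x ∈ B <;> simp [hxB]
  rw [← hΛ, ← hΛ]
  calc |Λ n ⟨g₁, hg₁⟩ - Λ n ⟨g₂, hg₂⟩ - (Λ K ⟨g₁, hg₁⟩ - Λ K ⟨g₂, hg₂⟩)|
      = |(Λ n ⟨g₁, hg₁⟩ - Λ K ⟨g₁, hg₁⟩) - (Λ n ⟨g₂, hg₂⟩ - Λ K ⟨g₂, hg₂⟩)| := by ring_nf
    _ ≤ ε + ε := (abs_sub _ _).trans (add_le_add (hF₁ n hn) (hF₂ n hn))
    _ = 2 * ε := by ring

end UnitInterval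

lemma eLpNorm_indicator_one_eq_ofReal_setIntegral_norm {β : Type*} [NormedAddCommGroup β]
    {f : α → β} (hf : Integrable f μ) {s : Set α} (hs : MeasurableSet s) :
    eLpNorm (s.indicator f) 1 μ = ENNReal.ofReal (∫ x in s, ‖f x‖ ∂μ) := by
  rw [eLpNorm_indicator_eq_eLpNorm_restrict hs, eLpNorm_one_eq_lintegral_enorm,
    ofReal_integral_norm_eq_lintegral_enorm hf.integrableOn]

lemma setIntegral_abs_le_of_forall_subset {f : α → ℝ} (hf : Integrable f μ) {s : Set α}
    (hs : MeasurableSet s) {ε : ℝ} (h : ∀ t ⊆ s, MeasurableSet t → |∫ x in t, f x ∂μ| ≤ ε) :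
    ∫ x in s, |f x| ∂μ ≤ 2 * ε := by
  set P := {x | 0 ≤ hf.1.mk f x}
  have hP : MeasurableSet P :=
    measurableSet_le measurable_const hf.1.stronglyMeasurable_mk.measurable
  have hpos : ∫ x in s ∩ P, |f x| ∂μ = ∫ x in s ∩ P, f x ∂μ := by
    refine setIntegral_congr_ae (hs.inter hP) ?_
    filter_upwards [hf.1.ae_eq_mk] with x hx hxP
    rw [abs_of_nonneg (hx ▸ hxP.2)]
  have hneg : ∫ x in s \ P, |f x| ∂μ = -∫ x in s \ P, f x ∂μ := by
    rw [← integral_neg]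
    refine setIntegral_congr_ae (hs.diff hP) ?_
    filter_upwards [hf.1.ae_eq_mk] with x hx hxP
    rw [abs_of_neg (hx ▸ not_le.1 hxP.2)]
  rw [← integral_inter_add_sdiff hP hf.abs.integrableOn, hpos, hneg, two_mul]
  exact add_le_add ((le_abs_self _).trans (h _ inter_subset_left (hs.inter hP)))
    ((neg_le_abs _).trans (h _ sdiff_subset (hs.diff hP)))

theorem unifIntegrable_of_tendsto_integral_mul [IsFiniteMeasure μ] {w : ℕ → α → ℝ}
    (hw : ∀ n, Integrable (w n) μ)
    (hweak : ∀ φ : α → ℝ, Measurable φ → (∃ M, ∀ᵐ x ∂μ, |φ x| ≤ M) →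
      ∃ c, Tendsto (fun n => ∫ x, φ x * w n x ∂μ) atTop (𝓝 c)) :
    UnifIntegrable w 1 μ := by
  intro ε hε
  obtain ⟨K, δ₁, hδ₁, hK⟩ :=
    exists_abs_setIntegral_sub_le_of_tendsto_integral_mul hw hweak (by positivity : 0 < ε / 6)
  obtain ⟨δ₂, hδ₂, hfin⟩ := unifIntegrable_finite (f := fun k : Fin (K + 1) => w k) le_rfl
    ENNReal.one_ne_top (fun k => memLp_one_iff_integrable.2 (hw k)) (by positivity : 0 < ε / 6)
  have hsmall : ∀ k ≤ K, ∀ t, MeasurableSet t → μ t ≤ ENNReal.ofReal δ₂ →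
      |∫ x in t, w k x ∂μ| ≤ ε / 6 := fun k hk t ht hμt => by
    have := hfin ⟨k, Nat.lt_succ_of_le hk⟩ t ht hμt
    rw [eLpNorm_indicator_one_eq_ofReal_setIntegral_norm (hw k) ht,
      ENNReal.ofReal_le_ofReal_iff (by positivity)] at this
    exact (abs_integral_le_integral_abs).trans this
  refine ⟨min δ₁ δ₂, lt_min hδ₁ hδ₂, fun n s hs hμs => ?_⟩
  rw [eLpNorm_indicator_one_eq_ofReal_setIntegral_norm (hw n) hs]
  refine ENNReal.ofReal_le_ofReal ?_
  simp only [Real.norm_eq_abs]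
  have := setIntegral_abs_le_of_forall_subset (hw n) hs (ε := ε / 2) fun t hts ht => by
    have hμt₁ : μ t ≤ ENNReal.ofReal δ₁ :=
      (measure_mono hts).trans (hμs.trans (ENNReal.ofReal_le_ofReal (min_le_left _ _)))
    have hμt₂ : μ t ≤ ENNReal.ofReal δ₂ :=
      (measure_mono hts).trans (hμs.trans (ENNReal.ofReal_le_ofReal (min_le_right _ _)))
    rcases le_total n K with hn | hn
    · linarith [hsmall n hn t ht hμt₂]
    · linarith [abs_sub_abs_le_abs_sub (∫ x in t, w n x ∂μ) (∫ x in t, w K x ∂μ),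
        hK n hn t ht hμt₁, hsmall K le_rfl t ht hμt₂]
  linarith

theorem MeasureTheory.UnifIntegrable.uniformIntegrable_of_finite_cover {ι κ β : Type*}
    [NormedAddCommGroup β] {f : ι → α → β} (hm : ∀ i, AEStronglyMeasurable (f i) μ)
    (hf : UnifIntegrable f 1 μ)
    (hcover : ∀ δ : ℝ, 0 < δ → ∃ (t : Finset κ) (s : κ → Set α),
      (∀ k ∈ t, MeasurableSet (s k) ∧ μ (s k) ≤ ENNReal.ofReal δ) ∧ μ (⋃ k ∈ t, s k)ᶜ = 0) :
    UniformIntegrable f 1 μ := by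
  obtain ⟨δ, hδ, hsmall⟩ := hf one_pos
  obtain ⟨t, s, hs, hnull⟩ := hcover δ hδ
  refine ⟨hm, hf, t.card, fun i => ?_⟩
  calc eLpNorm (f i) 1 μ = ∫⁻ x in ⋃ k ∈ t, s k, ‖f i x‖ₑ ∂μ := by
        rw [eLpNorm_one_eq_lintegral_enorm,
          Measure.restrict_eq_self_of_ae_mem (s := ⋃ k ∈ t, s k) (mem_ae_iff.2 hnull)]
    _ ≤ ∑ k ∈ t, ∫⁻ x in s k, ‖f i x‖ₑ ∂μ := by
        rw [← Finset.tsum_subtype, ← lintegral_sum_measure]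
        exact lintegral_mono' (Measure.restrict_biUnion_le (Set.to_countable _)) le_rfl
    _ ≤ ∑ _k ∈ t, 1 := by
        refine Finset.sum_le_sum fun k hk => ?_
        rw [← eLpNorm_one_eq_lintegral_enorm, ← eLpNorm_indicator_eq_eLpNorm_restrict (hs k hk).1]
        simpa using hsmall i (s k) (hs k hk).1 (hs k hk).2
    _ = t.card := by simp

theorem exists_finite_cover_volume_restrict_le {ι : Type*} [Fintype ι] [Nonempty ι]
    {Ω : Set (ι → ℝ)} (hΩ : Bornology.IsBounded Ω) {δ : ℝ} (hδ : 0 < δ) :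
    ∃ (t : Finset (ι → ℝ)) (s : (ι → ℝ) → Set (ι → ℝ)),
      (∀ c ∈ t, MeasurableSet (s c) ∧ volume.restrict Ω (s c) ≤ ENNReal.ofReal δ) ∧
      volume.restrict Ω (⋃ c ∈ t, s c)ᶜ = 0 := by
  -- balls of radius `r = min 1 δ / 2` have volume `(2r)^d ≤ 2r ≤ δ`
  have hr : 0 < min 1 δ / 2 := by positivity
  obtain ⟨c, -, hc, hcov⟩ := Metric.finite_approx_of_totallyBounded
    (hΩ.isCompact_closure.totallyBounded.subset subset_closure) _ hr
  refine ⟨hc.toFinset, fun x => Metric.ball x (min 1 δ / 2),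
    fun x _ => ⟨measurableSet_ball, ?_⟩, ?_⟩
  · refine (Measure.restrict_apply_le _ _).trans ?_
    rw [Real.volume_pi_ball _ hr, mul_div_cancel₀ _ two_ne_zero]
    refine ENNReal.ofReal_le_ofReal ((pow_le_of_le_one (by positivity) (min_le_left _ _)
      Fintype.card_ne_zero).trans (min_le_right _ _))
  · rw [Measure.restrict_apply
      (Finset.measurableSet_biUnion _ fun _ _ => measurableSet_ball).compl]
    refine measure_mono_null (fun x ⟨hxU, hxΩ⟩ => hxU ?_) measure_empty
    simpa using hcov hxΩ

lemma norm_integral_le_toReal_eLpNorm_one (f : α → ℝ) :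
    ‖∫ x, f x ∂μ‖ ≤ (eLpNorm f 1 μ).toReal := by
  by_cases hf : Integrable f μ
  · rw [eLpNorm_one_eq_lintegral_enorm, ← ofReal_integral_norm_eq_lintegral_enorm hf,
      ENNReal.toReal_ofReal (integral_nonneg fun _ => norm_nonneg _)]
    exact norm_integral_le_integral_norm f
  · simp [integral_undef hf]

lemma eLpNorm_mul_le_of_abs_le {g w : α → ℝ} (hgm : AEStronglyMeasurable g μ)
    (hwm : AEStronglyMeasurable w μ) {t : Set α} (ht : MeasurableSet t) {C e : ℝ≥0}
    (hC : ∀ x, |g x| ≤ C) (he : ∀ x ∉ t, |g x| ≤ e) :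
    eLpNorm (fun x => g x * w x) 1 μ ≤ C * eLpNorm (t.indicator w) 1 μ + e * eLpNorm w 1 μ := by
  set f : α → ℝ := fun x => g x * w x
  have hf : AEStronglyMeasurable f μ := hgm.mul hwm
  calc eLpNorm f 1 μ = eLpNorm (t.indicator f + tᶜ.indicator f) 1 μ := by
        rw [indicator_self_add_compl]
    _ ≤ eLpNorm (t.indicator f) 1 μ + eLpNorm (tᶜ.indicator f) 1 μ :=
        eLpNorm_add_le (hf.indicator ht) (hf.indicator ht.compl) le_rfl
    _ ≤ ENNReal.ofReal C * eLpNorm (t.indicator w) 1 μ + ENNReal.ofReal e * eLpNorm w 1 μ := by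
        gcongr <;> refine eLpNorm_le_mul_eLpNorm_of_ae_le_mul (.of_forall fun x => ?_) 1 <;>
          by_cases hx : x ∈ t
        · simpa [f, hx, abs_mul] using mul_le_mul_of_nonneg_right (hC x) (abs_nonneg (w x))
        · simp [f, hx]
        · simpa [f, hx] using mul_nonneg e.2 (abs_nonneg (w x))
        · simpa [f, hx, abs_mul] using mul_le_mul_of_nonneg_right (he x hx) (abs_nonneg (w x))
    _ = C * eLpNorm (t.indicator w) 1 μ + e * eLpNorm w 1 μ := by
        simp only [ENNReal.ofReal_coe_nnreal]

theorem tendsto_integral_mul_of_tendsto_ae_zero [IsFiniteMeasure μ] {g w : ℕ → α → ℝ}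
    {C : ℝ≥0} (hgm : ∀ n, StronglyMeasurable (g n)) (hgC : ∀ n x, |g n x| ≤ C)
    (hg : ∀ᵐ x ∂μ, Tendsto (fun n => g n x) atTop (𝓝 0)) (hw : UniformIntegrable w 1 μ) :
    Tendsto (fun n => ∫ x, g n x * w n x ∂μ) atTop (𝓝 0) := by
  obtain ⟨hwm, hui, K, hK⟩ := hw
  have key : ∀ e : ℝ≥0, 0 < e → ∀ᶠ n in atTop,
      eLpNorm (fun x => g n x * w n x) 1 μ ≤ e * (C + K) := by
    intro e he
    obtain ⟨δ, hδ, hsmall⟩ := hui (NNReal.coe_pos.2 he)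
    obtain ⟨t, ht, hμt, hunif⟩ :=
      tendstoUniformlyOn_of_ae_tendsto' hgm stronglyMeasurable_const hg hδ
    filter_upwards [Metric.tendstoUniformlyOn_iff.1 hunif e he] with n hn
    calc eLpNorm (fun x => g n x * w n x) 1 μ
        ≤ C * eLpNorm (t.indicator (w n)) 1 μ + e * eLpNorm (w n) 1 μ :=
          eLpNorm_mul_le_of_abs_le (hgm n).aestronglyMeasurable (hwm n) ht (hgC n)
            fun x hx => by simpa [abs_sub_comm] using (hn x hx).le
      _ ≤ C * e + e * K := by
          gcongr
          · simpa using hsmall n t ht hμt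
          · exact hK n
      _ = e * (C + K) := by ring
  rw [Metric.tendsto_nhds]
  intro ε hε
  have he : 0 < ε / (2 * (C + K + 1)) := by positivity
  set e : ℝ≥0 := ⟨ε / (2 * (C + K + 1)), he.le⟩
  filter_upwards [key e (NNReal.coe_pos.1 he)] with n hn
  rw [dist_zero_right]
  calc ‖∫ x, g n x * w n x ∂μ‖ ≤ e * (C + K) := by
        refine (norm_integral_le_toReal_eLpNorm_one _).trans ?_
        exact_mod_cast ENNReal.toReal_mono (by finiteness) hn
    _ < ε := by
        rw [show (e : ℝ) = ε / (2 * (C + K + 1)) from rfl, div_mul_eq_mul_div,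
          div_lt_iff₀ (by positivity)]
        nlinarith [C.2, K.2]

theorem tendsto_integral_mul_of_tendsto_ae [IsFiniteMeasure μ] {f : ℕ → α → ℝ} {f₀ : α → ℝ}
    {w : ℕ → α → ℝ} {C : ℝ} (hfm : ∀ n, StronglyMeasurable (f n))
    (hf₀m : StronglyMeasurable f₀) (hfC : ∀ n x, |f n x| ≤ C) (hf₀C : ∀ x, |f₀ x| ≤ C)
    (hf : ∀ᵐ x ∂μ, Tendsto (fun n => f n x) atTop (𝓝 (f₀ x))) (hw : UniformIntegrable w 1 μ)
    {l : ℝ} (hl : Tendsto (fun n => ∫ x, f₀ x * w n x ∂μ) atTop (𝓝 l)) :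
    Tendsto (fun n => ∫ x, f n x * w n x ∂μ) atTop (𝓝 l) := by
  have hint : ∀ g : α → ℝ, StronglyMeasurable g → (∀ x, |g x| ≤ C) → ∀ n,
      Integrable (fun x => g x * w n x) μ := fun g hgm hgC n =>
    ((hw.memLp n).integrable le_rfl).bdd_mul hgm.aestronglyMeasurable (.of_forall hgC)
  have hsplit : ∀ n, ∫ x, f n x * w n x ∂μ =
      (∫ x, (f n x - f₀ x) * w n x ∂μ) + ∫ x, f₀ x * w n x ∂μ := fun n => by
    rw [← sub_eq_iff_eq_add, ← integral_sub (hint _ (hfm n) (hfC n) n) (hint _ hf₀m hf₀C n)]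
    simp only [sub_mul]
  have hdiff : ∀ n x, |f n x - f₀ x| ≤ (2 * C).toNNReal := fun n x =>
    (abs_sub _ _).trans (by linarith [hfC n x, hf₀C x, (2 * C).le_coe_toNNReal])
  have hcorr := tendsto_integral_mul_of_tendsto_ae_zero (g := fun n x => f n x - f₀ x)
    (fun n => (hfm n).sub hf₀m) hdiff
    (hf.mono fun x hx => sub_self (f₀ x) ▸ hx.sub_const (f₀ x)) hw
  simpa only [hsplit, zero_add] using hcorr.add hl

theorem tendsto_integral_weak_strong_product_general {N : ℕ} (Ω : Set (Fin N → ℝ))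
    (hΩb : Bornology.IsBounded Ω)
    (v : ℕ → (Fin N → ℝ) → Matrix (Fin N) (Fin N) ℝ)
    (vlim : (Fin N → ℝ) → Matrix (Fin N) (Fin N) ℝ)
    (hv_int : ∀ n i j, IntegrableOn (fun x => v n x i j) Ω)
    (hweak : ∀ φ : (Fin N → ℝ) → ℝ, Measurable φ →
      (∃ M : ℝ, ∀ᵐ x ∂(volume.restrict Ω), |φ x| ≤ M) →
      ∀ i j, Tendsto (fun n => ∫ x in Ω, φ x * v n x i j) atTop
        (𝓝 (∫ x in Ω, φ x * vlim x i j)))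
    (y : ℕ → (Fin N → ℝ) → (Fin N → ℝ)) (ylim : (Fin N → ℝ) → (Fin N → ℝ))
    (hy_meas : ∀ n, Measurable (y n)) (hylim_meas : Measurable ylim)
    (hyae : ∀ᵐ x ∂(volume.restrict Ω), Tendsto (fun n => y n x) atTop (𝓝 (ylim x)))
    (ψ : (Fin N → ℝ) → ℝ) (hψc : Continuous ψ) (hψb : ∃ M : ℝ, ∀ ξ, |ψ ξ| ≤ M) :
    ∀ i j, Tendsto (fun n => ∫ x in Ω, ψ (y n x) * v n x i j) atTop
      (𝓝 (∫ x in Ω, ψ (ylim x) * vlim x i j)) := by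
  intro i j
  have : Nonempty (Fin N) := ⟨i⟩
  have : IsFiniteMeasure (volume.restrict Ω) :=
    isFiniteMeasure_restrict.2 hΩb.measure_lt_top.ne
  obtain ⟨M, hM⟩ := hψb
  have hv_unif : UniformIntegrable (fun n x => v n x i j) 1 (volume.restrict Ω) :=
    (unifIntegrable_of_tendsto_integral_mul (fun n => hv_int n i j)
      fun φ hφ hφb => ⟨_, hweak φ hφ hφb i j⟩).uniformIntegrable_of_finite_cover
      (fun n => (hv_int n i j).1) fun _ hδ => exists_finite_cover_volume_restrict_le hΩb hδ
  exact tendsto_integral_mul_of_tendsto_ae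
    (fun n => (hψc.measurable.comp (hy_meas n)).stronglyMeasurable)
    (hψc.measurable.comp hylim_meas).stronglyMeasurable (fun n x => hM (y n x))
    (fun x => hM (ylim x)) (hyae.mono fun x hx => (hψc.tendsto _).comp hx) hv_unif
    (hweak _ (hψc.measurable.comp hylim_meas) ⟨M, .of_forall fun x => hM (ylim x)⟩ i j)

/-- Weak–strong product convergence: if `vₙ → v` weakly in `L¹(Ω; ℝ^{N×N})` and `yₙ → y`
a.e. in `Ω`, then for every bounded continuous `ψ : ℝ^N → ℝ` one has
`∫_Ω ψ(yₙ) vₙ dx → ∫_Ω ψ(y) v dx` entrywise. -/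
theorem tendsto_integral_weak_strong_product {N : ℕ} (Ω : Set (Fin N → ℝ))
    (hΩm : MeasurableSet Ω) (hΩb : Bornology.IsBounded Ω)
    (v : ℕ → (Fin N → ℝ) → Matrix (Fin N) (Fin N) ℝ)
    (vlim : (Fin N → ℝ) → Matrix (Fin N) (Fin N) ℝ)
    (hv_int : ∀ n i j, IntegrableOn (fun x => v n x i j) Ω)
    (hvlim_int : ∀ i j, IntegrableOn (fun x => vlim x i j) Ω)
    (hweak : ∀ φ : (Fin N → ℝ) → ℝ, Measurable φ →
      (∃ M : ℝ, ∀ᵐ x ∂(volume.restrict Ω), |φ x| ≤ M) →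
      ∀ i j, Tendsto (fun n => ∫ x in Ω, φ x * v n x i j) atTop
        (𝓝 (∫ x in Ω, φ x * vlim x i j)))
    (y : ℕ → (Fin N → ℝ) → (Fin N → ℝ)) (ylim : (Fin N → ℝ) → (Fin N → ℝ))
    (hy_meas : ∀ n, Measurable (y n)) (hylim_meas : Measurable ylim)
    (hyae : ∀ᵐ x ∂(volume.restrict Ω), Tendsto (fun n => y n x) atTop (𝓝 (ylim x)))
    (ψ : (Fin N → ℝ) → ℝ) (hψc : Continuous ψ) (hψb : ∃ M : ℝ, ∀ ξ, |ψ ξ| ≤ M) :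
    ∀ i j, Tendsto (fun n => ∫ x in Ω, ψ (y n x) * v n x i j) atTop
      (𝓝 (∫ x in Ω, ψ (ylim x) * vlim x i j)) :=
  tendsto_integral_weak_strong_product_general Ω hΩb v vlim hv_int hweak y ylim hy_meas hylim_meas
    hyae ψ hψc hψb
end

section
/- Let E_n, E ⊆ ℝ^N be Lebesgue measurable sets with E of finite measure and with the measure of the symmetric difference E_n Δ E tending to 0 as n → ∞. Let u_n, u : ℝ^N → ℝ^m be integrable with: u_n = 0 almost everywhere on ℝ^N \ E_n for every n; sup_n ∫_{ℝ^N} |u_n| dξ < ∞; the family (u_n)_n uniformly integrable, i.e., for every ε > 0 there is δ > 0 such that sup_n ∫_A |u_n| dξ < ε whenever A has measure less than δ; and ∫_{ℝ^N} ψ·u_n dξ → ∫_{ℝ^N} ψ·u dξ for every bounded continuous ψ : ℝ^N → ℝ. Then ∫_{ℝ^N} φ·u_n dξ → ∫_{ℝ^N} φ·u dξ for every essentially bounded measurable φ : ℝ^N → ℝ. -/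
/-!
Let `ρ` be the finite measure `1_E dξ + |ulim| dξ`. By density of bounded continuous functions
in `L¹(ρ)`, followed by clamping, a bounded measurable `φ` is `ε`-close to a continuous `ψ` with
the same bound outside a set `G` of small `ρ`-measure. Then `|∫ (φ - ψ) • ulim|` is at most
`ε ‖ulim‖₁ + 2M ∫_G |ulim|`, which is small, and so is `|∫ (φ - ψ) • uₙ|` for large `n`: `uₙ`
lives on `Eₙ`, which is `E` up to a set of vanishing measure, and `|G ∩ E|` is small, so uniform
integrability controls `∫_G |uₙ|`. Testing against `ψ` and an `ε/3` argument finish.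
-/

open MeasureTheory Filter Topology
open scoped ENNReal symmDiff

theorem tendsto_of_forall_approx {ι E : Type*} [SeminormedAddCommGroup E] {l : Filter ι}
    {a : ι → E} {a₀ : E} (K : ℝ)
    (h : ∀ ε > 0, ∃ (b : ι → E) (b₀ : E), Tendsto b l (𝓝 b₀) ∧
      (∀ᶠ i in l, ‖a i - b i‖ ≤ K * ε) ∧ ‖a₀ - b₀‖ ≤ K * ε) :
    Tendsto a l (𝓝 a₀) := by
  refine Metric.tendsto_nhds.2 fun ε hε => ?_
  set ε' := ε / (3 * (|K| + 1))
  have hε' : 0 < ε' := by positivity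
  have hKε' : K * ε' < ε / 3 :=
    calc K * ε' ≤ |K| * ε' := by gcongr; exact le_abs_self K
      _ < (|K| + 1) * ε' := by gcongr; linarith
      _ = ε / 3 := by simp only [ε']; field_simp
  obtain ⟨b, b₀, hb, hab, hab₀⟩ := h ε' hε'
  filter_upwards [hab, Metric.tendsto_nhds.1 hb (ε / 3) (by positivity)] with i hi hbi
  calc dist (a i) a₀ ≤ dist (a i) (b i) + dist (b i) b₀ + dist b₀ a₀ := dist_triangle4 ..
    _ < ε := by rw [dist_eq_norm (a i), dist_eq_norm b₀, norm_sub_rev b₀]; linarith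

theorem norm_integral_smul_sub_smul_le {α E : Type*} [MeasurableSpace α] [NormedAddCommGroup E]
    [NormedSpace ℝ E] {μ : Measure α} {φ ψ : α → ℝ} {f : α → E} (hφ : Measurable φ)
    (hψ : Measurable ψ) (hf : Integrable f μ) {M ε : ℝ} (hφM : ∀ᵐ x ∂μ, |φ x| ≤ M)
    (hψM : ∀ᵐ x ∂μ, |ψ x| ≤ M) (hε : 0 ≤ ε) :
    ‖∫ x, φ x • f x ∂μ - ∫ x, ψ x • f x ∂μ‖ ≤
      ε * ∫ x, ‖f x‖ ∂μ + 2 * M * ∫ x in {x | ε ≤ |φ x - ψ x|}, ‖f x‖ ∂μ := by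
  set G := {x | ε ≤ |φ x - ψ x|}
  have hG : MeasurableSet G := measurableSet_le measurable_const (hφ.sub hψ).abs
  have hφf : Integrable (fun x => φ x • f x) μ :=
    hf.bdd_smul M hφ.aestronglyMeasurable (by simpa only [Real.norm_eq_abs] using hφM)
  have hψf : Integrable (fun x => ψ x • f x) μ :=
    hf.bdd_smul M hψ.aestronglyMeasurable (by simpa only [Real.norm_eq_abs] using hψM)
  have hbound : ∀ᵐ x ∂μ,
      ‖φ x • f x - ψ x • f x‖ ≤ ε * ‖f x‖ + 2 * M * G.indicator (‖f ·‖) x := by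
    filter_upwards [hφM, hψM] with x hφx hψx
    rw [← sub_smul, norm_smul, Real.norm_eq_abs]
    by_cases hx : x ∈ G
    · rw [Set.indicator_of_mem hx]
      have : |φ x - ψ x| ≤ 2 * M := (abs_sub _ _).trans (by linarith)
      nlinarith [norm_nonneg (f x)]
    · rw [Set.indicator_of_notMem hx, mul_zero, add_zero]
      exact mul_le_mul_of_nonneg_right (not_le.1 hx).le (norm_nonneg _)
  rw [← integral_sub hφf hψf]
  refine (norm_integral_le_of_norm_le (g := fun x => ε * ‖f x‖ + 2 * M * G.indicator (‖f ·‖) x)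
    ((hf.norm.const_mul ε).add ((hf.norm.indicator hG).const_mul (2 * M))) hbound).trans_eq ?_
  rw [integral_add (hf.norm.const_mul ε) ((hf.norm.indicator hG).const_mul (2 * M)),
    integral_const_mul, integral_const_mul, integral_indicator hG]

theorem exists_eventually_setIntegral_norm_lt {α F : Type*} [MeasurableSpace α]
    [NormedAddCommGroup F] {μ : Measure α} {E : ℕ → Set α} {E₀ : Set α}
    (hE : ∀ n, MeasurableSet (E n)) (hE₀ : MeasurableSet E₀)
    (hE_conv : Tendsto (fun n => μ (E n ∆ E₀)) atTop (𝓝 0)) {u : ℕ → α → F}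
    (hu_int : ∀ n, Integrable (u n) μ) (hu_zero : ∀ n, ∀ᵐ x ∂μ, x ∉ E n → u n x = 0)
    (hu_ui : ∀ ε : ℝ, 0 < ε → ∃ δ : ℝ, 0 < δ ∧ ∀ A : Set α,
      MeasurableSet A → μ A < ENNReal.ofReal δ → ∀ n, ∫ x in A, ‖u n x‖ ∂μ < ε)
    {ε : ℝ} (hε : 0 < ε) :
    ∃ δ : ℝ, 0 < δ ∧ ∀ᶠ n in atTop, ∀ A : Set α, MeasurableSet A →
      μ (A ∩ E₀) < ENNReal.ofReal δ → ∫ x in A, ‖u n x‖ ∂μ < ε := by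
  obtain ⟨δ, hδ, hui⟩ := hu_ui (ε / 2) (by positivity)
  refine ⟨δ, hδ, ?_⟩
  filter_upwards [hE_conv.eventually_lt_const (ENNReal.ofReal_pos.2 hδ)] with n hn A hA hAE₀
  have hout : ∫ x in A \ E₀, ‖u n x‖ ∂μ = ∫ x in (A \ E₀) ∩ E n, ‖u n x‖ ∂μ := by
    refine setIntegral_eq_of_subset_of_ae_sdiff_eq_zero (hA.diff hE₀).nullMeasurableSet
      Set.inter_subset_left ?_
    filter_upwards [hu_zero n] with x hx hx'
    rw [hx fun hxE => hx'.2 ⟨hx'.1, hxE⟩, norm_zero]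
  have hout_lt : μ ((A \ E₀) ∩ E n) < ENNReal.ofReal δ :=
    (measure_mono fun x hx => Or.inl ⟨hx.2, hx.1.2⟩).trans_lt hn
  rw [← integral_inter_add_sdiff hE₀ (hu_int n).norm.integrableOn, hout]
  linarith [hui _ (hA.inter hE₀) hAE₀ n, hui _ ((hA.diff hE₀).inter (hE n)) hout_lt n]

theorem exists_continuous_abs_le_measure_setOf_le_abs_sub_lt {X : Type*} [TopologicalSpace X]
    [NormalSpace X] [MeasurableSpace X] [BorelSpace X] {ρ : Measure X} [IsFiniteMeasure ρ]
    [ρ.WeaklyRegular] {φ : X → ℝ} (hφ : AEStronglyMeasurable φ ρ) {M : ℝ} (hM : 0 ≤ M)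
    (hφM : ∀ᵐ x ∂ρ, |φ x| ≤ M) {ε η : ℝ} (hε : 0 < ε) (hη : 0 < η) :
    ∃ ψ : X → ℝ, Continuous ψ ∧ (∀ x, |ψ x| ≤ M) ∧
      ρ {x | ε ≤ |φ x - ψ x|} < ENNReal.ofReal η := by
  have hMM : -M ≤ M := by linarith
  have hφ_int : Integrable φ ρ :=
    Integrable.of_bound hφ M (by simpa only [Real.norm_eq_abs] using hφM)
  obtain ⟨g, hφg, hg⟩ :=
    hφ_int.exists_boundedContinuous_integral_sub_le (show 0 < ε * η / 2 by positivity)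
  refine ⟨fun x => Set.projIcc (-M) M hMM (g x), continuous_subtype_val.comp
    (continuous_projIcc.comp g.continuous), fun x => abs_le.2 (Set.projIcc _ _ hMM _).2, ?_⟩
  have hclamp : ∀ᵐ x ∂ρ, |φ x - Set.projIcc (-M) M hMM (g x)| ≤ |φ x - g x| := by
    filter_upwards [hφM] with x hx
    simpa only [Set.projIcc_of_mem hMM (abs_le.1 hx)] using
      Set.abs_projIcc_sub_projIcc hMM (c := φ x) (d := g x)
  have hmarkov : ε * (ρ {x | ε ≤ |φ x - g x|}).toReal ≤ ∫ x, |φ x - g x| ∂ρ :=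
    mul_meas_ge_le_integral_of_nonneg (ae_of_all _ fun x => abs_nonneg _) (hφ_int.sub hg).abs ε
  have hsmall : (ρ {x | ε ≤ |φ x - g x|}).toReal < η := by
    simp only [Real.norm_eq_abs] at hφg
    exact lt_of_mul_lt_mul_left (by nlinarith) hε.le
  refine (measure_mono_ae ?_).trans_lt
    ((ENNReal.lt_ofReal_iff_toReal_lt (measure_ne_top _ _)).2 hsmall)
  filter_upwards [hclamp] with x hx hxε using hxε.trans hx

theorem exists_continuous_abs_le_measure_inter_lt_and_setIntegral_norm_lt {X F : Type*}
    [TopologicalSpace X] [TopologicalSpace.PseudoMetrizableSpace X] [MeasurableSpace X]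
    [BorelSpace X] [NormedAddCommGroup F] {μ : Measure X} {E₀ : Set X} (hE₀ : μ E₀ < ⊤)
    {g : X → F} (hg : Integrable g μ) {φ : X → ℝ} (hφ : Measurable φ) {M : ℝ} (hM : 0 ≤ M)
    (hφM : ∀ᵐ x ∂μ, |φ x| ≤ M) {ε δ η : ℝ} (hε : 0 < ε) (hδ : 0 < δ) (hη : 0 < η) :
    ∃ ψ : X → ℝ, Continuous ψ ∧ (∀ x, |ψ x| ≤ M) ∧
      μ ({x | ε ≤ |φ x - ψ x|} ∩ E₀) < ENNReal.ofReal δ ∧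
      ∫ x in {x | ε ≤ |φ x - ψ x|}, ‖g x‖ ∂μ < η := by
  -- A set of small `ρ`-measure has small `μ`-measure inside `E₀` and carries little of `‖g‖`.
  set ρ := μ.restrict E₀ + μ.withDensity (‖g ·‖ₑ)
  have : IsFiniteMeasure ρ := by
    have : IsFiniteMeasure (μ.restrict E₀) := isFiniteMeasure_restrict.2 hE₀.ne
    have : IsFiniteMeasure (μ.withDensity (‖g ·‖ₑ)) := isFiniteMeasure_withDensity hg.2.ne
    infer_instance
  obtain ⟨ψ, hψ, hψM, hG⟩ := exists_continuous_abs_le_measure_setOf_le_abs_sub_lt (ρ := ρ)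
    hφ.aestronglyMeasurable hM
    ((Measure.absolutelyContinuous_restrict.add_left (withDensity_absolutelyContinuous _ _)).ae_le
      hφM) hε (lt_min hδ hη)
  have hG_meas : MeasurableSet {x | ε ≤ |φ x - ψ x|} :=
    measurableSet_le measurable_const (hφ.sub hψ.measurable).abs
  rw [Measure.add_apply, Measure.restrict_apply hG_meas, withDensity_apply _ hG_meas] at hG
  refine ⟨ψ, hψ, hψM, (le_self_add.trans_lt hG).trans_le
    (ENNReal.ofReal_le_ofReal (min_le_left _ _)), ?_⟩
  rw [integral_norm_eq_lintegral_enorm hg.1.restrict]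
  exact ENNReal.toReal_lt_of_lt_ofReal
    ((le_add_self.trans_lt hG).trans_le (ENNReal.ofReal_le_ofReal (min_le_right _ _)))

/-- Upgrading weak convergence tested against bounded continuous functions to full weak `L¹`
convergence (duality with `L∞`), for a uniformly integrable sequence vanishing outside sets
`Eₙ` converging in measure to a set `E` of finite measure. -/
theorem weak_L1_convergence_of_tendsto_boundedContinuous {N m : ℕ}
    (E : ℕ → Set (Fin N → ℝ)) (Elim : Set (Fin N → ℝ))
    (hE_meas : ∀ n, MeasurableSet (E n)) (hElim_meas : MeasurableSet Elim)
    (hElim_fin : volume Elim < ⊤)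
    (hE_conv : Tendsto (fun n => volume ((E n) ∆ Elim)) atTop (𝓝 0))
    (u : ℕ → (Fin N → ℝ) → (Fin m → ℝ)) (ulim : (Fin N → ℝ) → (Fin m → ℝ))
    (hu_int : ∀ n, Integrable (u n)) (hulim_int : Integrable ulim)
    (hu_zero : ∀ n, ∀ᵐ ξ, ξ ∉ E n → u n ξ = 0)
    (hu_bdd : ∃ C : ℝ, ∀ n, ∫ ξ, ‖u n ξ‖ ≤ C)
    (hu_ui : ∀ ε : ℝ, 0 < ε → ∃ δ : ℝ, 0 < δ ∧ ∀ A : Set (Fin N → ℝ),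
      MeasurableSet A → volume A < ENNReal.ofReal δ →
      ∀ n, ∫ ξ in A, ‖u n ξ‖ < ε)
    (hu_weakBC : ∀ ψ : (Fin N → ℝ) → ℝ, Continuous ψ → (∃ M : ℝ, ∀ ξ, |ψ ξ| ≤ M) →
      Tendsto (fun n => ∫ ξ, ψ ξ • u n ξ) atTop (𝓝 (∫ ξ, ψ ξ • ulim ξ))) :
    ∀ φ : (Fin N → ℝ) → ℝ, Measurable φ → (∃ M : ℝ, ∀ᵐ ξ, |φ ξ| ≤ M) →
      Tendsto (fun n => ∫ ξ, φ ξ • u n ξ) atTop (𝓝 (∫ ξ, φ ξ • ulim ξ)) := by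
  rintro φ hφ ⟨M₀, hM₀⟩
  obtain ⟨C, hC⟩ := hu_bdd
  have hC₀ : 0 ≤ C := (integral_nonneg fun ξ => norm_nonneg (u 0 ξ)).trans (hC 0)
  have hulim₀ : 0 ≤ ∫ ξ, ‖ulim ξ‖ := integral_nonneg fun ξ => norm_nonneg _
  set M := max M₀ 0
  have hM : 0 ≤ M := le_max_right _ _
  have hφM : ∀ᵐ ξ, |φ ξ| ≤ M := hM₀.mono fun _ h => h.trans (le_max_left _ _)
  refine tendsto_of_forall_approx (C + (∫ ξ, ‖ulim ξ‖) + 2 * M) fun ε hε => ?_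
  obtain ⟨δ, hδ, hsmall⟩ := exists_eventually_setIntegral_norm_lt hE_meas hElim_meas hE_conv
    hu_int hu_zero hu_ui hε
  obtain ⟨ψ, hψ, hψM, hGElim, hGulim⟩ :=
    exists_continuous_abs_le_measure_inter_lt_and_setIntegral_norm_lt hElim_fin hulim_int hφ hM
      hφM hε hδ hε
  set G := {ξ | ε ≤ |φ ξ - ψ ξ|}
  have hG_meas : MeasurableSet G := measurableSet_le measurable_const (hφ.sub hψ.measurable).abs
  refine ⟨fun n => ∫ ξ, ψ ξ • u n ξ, ∫ ξ, ψ ξ • ulim ξ, hu_weakBC ψ hψ ⟨M, hψM⟩, ?_, ?_⟩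
  · filter_upwards [hsmall] with n hn
    calc _ ≤ ε * (∫ ξ, ‖u n ξ‖) + 2 * M * ∫ ξ in G, ‖u n ξ‖ :=
          norm_integral_smul_sub_smul_le hφ hψ.measurable (hu_int n) hφM (ae_of_all _ hψM) hε.le
      _ ≤ ε * C + 2 * M * ε := by gcongr; exacts [hC n, (hn G hG_meas hGElim).le]
      _ ≤ _ := by nlinarith [mul_nonneg hulim₀ hε.le]
  · calc _ ≤ ε * (∫ ξ, ‖ulim ξ‖) + 2 * M * ∫ ξ in G, ‖ulim ξ‖ :=
          norm_integral_smul_sub_smul_le hφ hψ.measurable hulim_int hφM (ae_of_all _ hψM) hε.le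
      _ ≤ ε * (∫ ξ, ‖ulim ξ‖) + 2 * M * ε := by gcongr
      _ ≤ _ := by nlinarith [mul_nonneg hC₀ hε.le]
end

section
/- Let N ≥ 1, let GL⁺ denote the open set of N×N real matrices with positive determinant, and let W : GL⁺ → [0, +∞) be continuously differentiable with the property that there is a constant c̃ > 0 such that |DW(G)[M·G]| ≤ c̃·(W(G) + 1)·‖M‖ for every G ∈ GL⁺ and every N×N matrix M, where DW(G) denotes the Fréchet derivative of W at G and ‖·‖ the operator norm. Then for every F ∈ GL⁺, every N×N matrix A, and every t ∈ ℝ with |t|·‖A‖ ≤ 1/2, the matrix (I + t·A)·F has positive determinant and W((I + t·A)·F) + 1 ≤ exp(2·c̃·‖A‖·|t|)·(W(F) + 1). -/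
/-!
Along the path `g s = (1 + s • A) * F` one has `(W ∘ g)' s = DW(g s)[A F] = DW(g s)[M (g s)]` with
`M = A (1 + s • A)⁻¹`, and `‖M‖ ≤ 2 ‖A‖` as long as `|s| ‖A‖ ≤ 1/2`. Condition (W3) therefore
gives `|(W ∘ g + 1)'| ≤ 2 c̃ ‖A‖ (W ∘ g + 1)`, and the mean value inequality for `log (W ∘ g + 1)`
turns this into the exponential bound. The path stays in `GL⁺` because `1 + s • A` is invertible
for `‖s • A‖ < 1` and `det (1 + s • A)` starts at `1`.
-/

open Filter Topology

attribute [local instance] Matrix.linftyOpNormedAddCommGroup Matrix.linftyOpNormedSpace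

open Real Set

namespace Matrix

variable {n : Type*} [Fintype n] [DecidableEq n]

theorem det_one_add_ne_zero_of_norm_lt_one {B : Matrix n n ℝ} (hB : ‖B‖ < 1) :
    (1 + B).det ≠ 0 := by
  intro hdet
  obtain ⟨v, hv, hBv⟩ := exists_mulVec_eq_zero_iff.2 hdet
  have hv_eq : v = -(B *ᵥ v) := by
    rw [add_mulVec, one_mulVec] at hBv
    exact eq_neg_of_add_eq_zero_left hBv
  have : ‖v‖ ≤ ‖B‖ * ‖v‖ := by
    calc ‖v‖ = ‖B *ᵥ v‖ := by rw [hv_eq, norm_neg, ← hv_eq]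
      _ ≤ ‖B‖ * ‖v‖ := linfty_opNorm_mulVec B v
  nlinarith [norm_pos_iff.2 hv]

theorem det_one_add_pos_of_norm_lt_one {B : Matrix n n ℝ} (hB : ‖B‖ < 1) :
    0 < (1 + B).det := by
  set f : ℝ → ℝ := fun r => (1 + r • B).det
  have hf : Continuous f := (continuous_const.add (continuous_id.smul continuous_const)).matrix_det
  by_contra! hf₁
  have hf₀ : f 0 = 1 := by simp [f]
  obtain ⟨r, ⟨hr₀, hr₁⟩, hfr⟩ : (0 : ℝ) ∈ f '' Icc 0 1 :=
    intermediate_value_Icc' zero_le_one hf.continuousOn ⟨by simpa [f] using hf₁, by simp [hf₀]⟩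
  refine det_one_add_ne_zero_of_norm_lt_one ?_ hfr
  calc ‖r • B‖ = r * ‖B‖ := by rw [norm_smul, norm_of_nonneg hr₀]
    _ ≤ 1 * ‖B‖ := by gcongr
    _ < 1 := by linarith

/-- `C = A * (1 + B)⁻¹` satisfies `C = A - C * B`. -/
theorem norm_mul_inv_one_add_le {A B : Matrix n n ℝ} (hB : ‖B‖ < 1) :
    ‖A * (1 + B)⁻¹‖ ≤ (1 - ‖B‖)⁻¹ * ‖A‖ := by
  set C := A * (1 + B)⁻¹
  have hunit : IsUnit (1 + B).det := (det_one_add_ne_zero_of_norm_lt_one hB).isUnit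
  have hC : C = A - C * B := by
    have : C * (1 + B) = A := by simp only [C, mul_assoc, nonsing_inv_mul _ hunit, mul_one]
    rw [← this]; noncomm_ring
  have : ‖C‖ ≤ ‖A‖ + ‖C‖ * ‖B‖ :=
    calc ‖C‖ = ‖A - C * B‖ := congrArg _ hC
      _ ≤ ‖A‖ + ‖C * B‖ := norm_sub_le _ _
      _ ≤ ‖A‖ + ‖C‖ * ‖B‖ := by gcongr; exact linfty_opNorm_mul C B
  rw [inv_mul_eq_div, le_div_iff₀ (by linarith)]
  linarith

end Matrix

theorem le_exp_mul_abs_mul_of_abs_deriv_le {f f' : ℝ → ℝ} {K t : ℝ}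
    (hf : ∀ s ∈ uIcc 0 t, HasDerivAt f (f' s) s) (hpos : ∀ s ∈ uIcc 0 t, 0 < f s)
    (hbound : ∀ s ∈ uIcc 0 t, |f' s| ≤ K * f s) :
    f t ≤ exp (K * |t|) * f 0 := by
  have hlog : ∀ s ∈ uIcc 0 t,
      HasDerivWithinAt (fun s => log (f s)) (f' s / f s) (uIcc 0 t) s :=
    fun s hs => ((hf s hs).log (hpos s hs).ne').hasDerivWithinAt
  have hlog_bound : ∀ s ∈ uIcc 0 t, ‖f' s / f s‖ ≤ K := fun s hs => by
    rw [norm_eq_abs, abs_div, abs_of_pos (hpos s hs), div_le_iff₀ (hpos s hs)]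
    exact hbound s hs
  have hmvt := (convex_uIcc 0 t).norm_image_sub_le_of_norm_hasDerivWithin_le hlog hlog_bound
    left_mem_uIcc right_mem_uIcc
  rw [norm_eq_abs, norm_eq_abs, sub_zero] at hmvt
  rw [← exp_log (hpos t right_mem_uIcc), ← exp_log (hpos 0 left_mem_uIcc), ← exp_add]
  exact exp_le_exp.2 (by linarith [le_abs_self (log (f t) - log (f 0))])

section OuterVariation

variable {n : Type*} [Fintype n] [DecidableEq n]

theorem hasDerivAt_one_add_smul_mul (A F : Matrix n n ℝ) (s : ℝ) :
    HasDerivAt (fun s : ℝ => (1 + s • A) * F) (A * F) s := by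
  have h := ((hasDerivAt_id s).smul_const (A * F)).const_add F
  rw [one_smul] at h
  have hpath : (fun s : ℝ => (1 + s • A) * F) = fun s => F + s • (A * F) := by
    funext s
    rw [add_mul, one_mul, smul_mul_assoc]
  rw [hpath]
  exact h

theorem det_one_add_smul_mul_pos {A F : Matrix n n ℝ} {s : ℝ} (hF : 0 < F.det)
    (hs : |s| * ‖A‖ < 1) : 0 < ((1 + s • A) * F).det := by
  rw [Matrix.det_mul]
  refine mul_pos (Matrix.det_one_add_pos_of_norm_lt_one ?_) hF
  rwa [norm_smul, norm_eq_abs]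

theorem abs_fderiv_one_add_smul_mul_le {W : Matrix n n ℝ → ℝ} {c : ℝ} (hc : 0 ≤ c)
    (hW_control : ∀ G : Matrix n n ℝ, 0 < G.det →
      ∀ M : Matrix n n ℝ, |fderiv ℝ W G (M * G)| ≤ c * (W G + 1) * ‖M‖)
    (hW_nonneg : ∀ G : Matrix n n ℝ, 0 < G.det → 0 ≤ W G)
    {A F : Matrix n n ℝ} {s : ℝ} (hF : 0 < F.det) (hs : |s| * ‖A‖ ≤ 1 / 2) :
    |fderiv ℝ W ((1 + s • A) * F) (A * F)| ≤ 2 * c * ‖A‖ * (W ((1 + s • A) * F) + 1) := by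
  set G := (1 + s • A) * F
  have hsA : ‖s • A‖ ≤ 1 / 2 := by rwa [norm_smul, norm_eq_abs]
  have hG : 0 < G.det := det_one_add_smul_mul_pos hF (by linarith)
  have hunit : IsUnit (1 + s • A).det :=
    (Matrix.det_one_add_ne_zero_of_norm_lt_one (by linarith)).isUnit
  have hAF : A * F = A * (1 + s • A)⁻¹ * G := by
    simp only [G, mul_assoc, Matrix.nonsing_inv_mul_cancel_left _ _ hunit]
  have hM : ‖A * (1 + s • A)⁻¹‖ ≤ 2 * ‖A‖ := by
    calc ‖A * (1 + s • A)⁻¹‖ ≤ (1 - ‖s • A‖)⁻¹ * ‖A‖ :=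
          Matrix.norm_mul_inv_one_add_le (by linarith)
      _ ≤ 2 * ‖A‖ := by
          gcongr
          rw [inv_le_comm₀ (by linarith) two_pos]
          linarith
  have hW1 : 0 ≤ c * (W G + 1) := mul_nonneg hc (by linarith [hW_nonneg G hG])
  calc |fderiv ℝ W G (A * F)| ≤ c * (W G + 1) * ‖A * (1 + s • A)⁻¹‖ := by
        rw [hAF]; exact hW_control G hG _
    _ ≤ c * (W G + 1) * (2 * ‖A‖) := by gcongr
    _ = 2 * c * ‖A‖ * (W G + 1) := by ring

end OuterVariation

theorem energy_control_along_outer_variation_general {N : ℕ}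
    (W : Matrix (Fin N) (Fin N) ℝ → ℝ) (ctil : ℝ) (hctil : 0 < ctil)
    (hW_nonneg : ∀ G : Matrix (Fin N) (Fin N) ℝ, 0 < G.det → 0 ≤ W G)
    (hW_diff : ContDiffOn ℝ 1 W {G : Matrix (Fin N) (Fin N) ℝ | 0 < G.det})
    (hW_control : ∀ G : Matrix (Fin N) (Fin N) ℝ, 0 < G.det →
      ∀ M : Matrix (Fin N) (Fin N) ℝ, |fderiv ℝ W G (M * G)| ≤ ctil * (W G + 1) * ‖M‖) :
    ∀ F : Matrix (Fin N) (Fin N) ℝ, 0 < F.det →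
      ∀ A : Matrix (Fin N) (Fin N) ℝ, ∀ t : ℝ, |t| * ‖A‖ ≤ 1 / 2 →
        0 < ((1 + t • A) * F).det ∧
        W ((1 + t • A) * F) + 1 ≤ Real.exp (2 * ctil * ‖A‖ * |t|) * (W F + 1) := by
  intro F hF A t ht
  have hsmall : ∀ s ∈ uIcc 0 t, |s| * ‖A‖ ≤ 1 / 2 := fun s hs => by
    have hst := abs_sub_left_of_mem_uIcc hs
    rw [sub_zero, sub_zero] at hst
    exact (mul_le_mul_of_nonneg_right hst (norm_nonneg A)).trans ht
  have hdet : ∀ s ∈ uIcc 0 t, 0 < ((1 + s • A) * F).det := fun s hs =>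
    det_one_add_smul_mul_pos hF (by linarith [hsmall s hs])
  refine ⟨hdet t right_mem_uIcc, ?_⟩
  have hGL : IsOpen {G : Matrix (Fin N) (Fin N) ℝ | 0 < G.det} :=
    isOpen_lt continuous_const continuous_id.matrix_det
  have hW_diffAt : ∀ s ∈ uIcc 0 t, DifferentiableAt ℝ W ((1 + s • A) * F) := fun s hs =>
    (hW_diff.differentiableOn one_ne_zero).differentiableAt (hGL.mem_nhds (hdet s hs))
  have hgronwall := le_exp_mul_abs_mul_of_abs_deriv_le
    (f := fun s => W ((1 + s • A) * F) + 1)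
    (fun s hs => ((hW_diffAt s hs).hasFDerivAt.comp_hasDerivAt s
      (hasDerivAt_one_add_smul_mul A F s)).add_const 1)
    (fun s hs => by linarith [hW_nonneg _ (hdet s hs)])
    (fun s hs => abs_fderiv_one_add_smul_mul_le hctil.le hW_control hW_nonneg hF (hsmall s hs))
  simpa using hgronwall

/-- Gronwall-type bound from the control condition (W3): if `W : GL⁺ → [0,∞)` is `C¹` with
`|DW(G)[M G]| ≤ ctil (W(G)+1) ‖M‖`, then for `|t| ‖A‖ ≤ 1/2` the matrix `(I + t A) F` lies in
`GL⁺` and `W((I + t A) F) + 1 ≤ exp(2 ctil ‖A‖ |t|) (W(F) + 1)`. -/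
theorem energy_control_along_outer_variation {N : ℕ} (hN : 1 ≤ N)
    (W : Matrix (Fin N) (Fin N) ℝ → ℝ) (ctil : ℝ) (hctil : 0 < ctil)
    (hW_nonneg : ∀ G : Matrix (Fin N) (Fin N) ℝ, 0 < G.det → 0 ≤ W G)
    (hW_diff : ContDiffOn ℝ 1 W {G : Matrix (Fin N) (Fin N) ℝ | 0 < G.det})
    (hW_control : ∀ G : Matrix (Fin N) (Fin N) ℝ, 0 < G.det →
      ∀ M : Matrix (Fin N) (Fin N) ℝ, |fderiv ℝ W G (M * G)| ≤ ctil * (W G + 1) * ‖M‖) :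
    ∀ F : Matrix (Fin N) (Fin N) ℝ, 0 < F.det →
      ∀ A : Matrix (Fin N) (Fin N) ℝ, ∀ t : ℝ, |t| * ‖A‖ ≤ 1 / 2 →
        0 < ((1 + t • A) * F).det ∧
        W ((1 + t • A) * F) + 1 ≤ Real.exp (2 * ctil * ‖A‖ * |t|) * (W F + 1) :=
  energy_control_along_outer_variation_general W ctil hctil hW_nonneg hW_diff hW_control
end

section
/- Let (Ω, μ) be a finite measure space, m ≥ 1, and g : ℝ^m → [0, +∞) a convex function. Let v_n, v : Ω → ℝ^m be integrable with ∫_Ω φ·v_n dμ → ∫_Ω φ·v dμ for every essentially bounded measurable φ : Ω → ℝ^m (with the Euclidean inner product φ·v_n). Then ∫_Ω g(v(x)) dμ(x) ≤ liminf_{n→∞} ∫_Ω g(v_n(x)) dμ(x), where the integrals take values in [0, +∞]. -/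
/-!
A finite convex function `g` on `ℝ^m` is the supremum of countably many affine functions
`ℓₖ + cₖ`, so by monotone convergence it suffices to bound `∫ (max_{k ≤ K} (ℓₖ + cₖ)(vlim))⁺`
for each `K`. Choosing measurably an index `k(x) ≤ K` at which the maximum is attained at
`vlim x`, the maximum becomes `φ(x) · vlim x + c(x)` with `φ, c` bounded and measurable, and
`φ(x) · z + c(x) ≤ g z` for all `z`. Testing the weak convergence against `φ` identifies the
limit of `∫ φ · vₙ + c`, which is at most `liminf ∫ g(vₙ)`.
-/

open MeasureTheory Filter Topology
open scoped ENNReal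
open Set Function

theorem ofReal_integral_le_lintegral_ofReal {α : Type*} [MeasurableSpace α] {μ : Measure α}
    {f : α → ℝ} (hf : Integrable f μ) :
    ENNReal.ofReal (∫ x, f x ∂μ) ≤ ∫⁻ x, ENNReal.ofReal (f x) ∂μ := by
  calc ENNReal.ofReal (∫ x, f x ∂μ)
      ≤ ENNReal.ofReal (∫⁻ x, ENNReal.ofReal (f x) ∂μ).toReal := by
        rw [integral_eq_lintegral_pos_part_sub_lintegral_neg_part hf]
        exact ENNReal.ofReal_le_ofReal (sub_le_self _ ENNReal.toReal_nonneg)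
    _ ≤ ∫⁻ x, ENNReal.ofReal (f x) ∂μ := ENNReal.ofReal_toReal_le

theorem lintegral_ofReal_le_liminf_of_tendsto_integral {α : Type*} [MeasurableSpace α]
    {μ : Measure α} {ψ : ℕ → α → ℝ} {ψlim : α → ℝ} {G : ℕ → α → ℝ≥0∞}
    (hψ : ∀ n, Integrable (ψ n) μ) (hψlim : Integrable ψlim μ) (hψlim_nonneg : 0 ≤ᵐ[μ] ψlim)
    (hψG : ∀ n, ∀ᵐ x ∂μ, ENNReal.ofReal (ψ n x) ≤ G n x)
    (hlim : Tendsto (fun n => ∫ x, ψ n x ∂μ) atTop (𝓝 (∫ x, ψlim x ∂μ))) :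
    ∫⁻ x, ENNReal.ofReal (ψlim x) ∂μ ≤ atTop.liminf fun n => ∫⁻ x, G n x ∂μ := by
  rw [← ofReal_integral_eq_lintegral_ofReal hψlim hψlim_nonneg,
    ← (ENNReal.tendsto_ofReal hlim).liminf_eq]
  exact liminf_le_liminf (Eventually.of_forall fun n =>
    (ofReal_integral_le_lintegral_ofReal (hψ n)).trans (lintegral_mono_ae (hψG n)))

theorem Measurable.partialSups {X α : Type*} [MeasurableSpace X] [MeasurableSpace α]
    [SemilatticeSup α] [MeasurableSup₂ α] {f : ℕ → X → α} (hf : ∀ k, Measurable (f k)) (K : ℕ) :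
    Measurable (partialSups f K) := by
  induction K with
  | zero => simpa using hf 0
  | succ K ih => simpa using ih.sup (hf (K + 1))

theorem exists_measurable_eq_partialSups {X : Type*} [MeasurableSpace X] {f : ℕ → X → ℝ}
    (hf : ∀ k, Measurable (f k)) (K : ℕ) :
    ∃ τ : X → ℕ, Measurable τ ∧ (∀ x, τ x ≤ K) ∧ ∀ x, f (τ x) x = partialSups f K x := by
  induction K with
  | zero => exact ⟨fun _ => 0, measurable_const, fun _ => le_rfl, fun x => by simp⟩
  | succ K ih =>
    obtain ⟨τ, hτ, hτK, hτf⟩ := ih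
    classical
    let S := {x | partialSups f K x < f (K + 1) x}
    have hS : MeasurableSet S := measurableSet_lt (Measurable.partialSups hf K) (hf (K + 1))
    refine ⟨S.piecewise (fun _ => K + 1) τ, Measurable.piecewise hS measurable_const hτ,
      fun x => ?_, fun x => ?_⟩
    · by_cases hx : x ∈ S
      · simp [hx]
      · simp [hx, (hτK x).trans K.le_succ]
    · have hsucc : partialSups f (K + 1) x = max (partialSups f K x) (f (K + 1) x) := by
        simp
      by_cases hx : partialSups f K x < f (K + 1) x
      · simp [S, hx, hsucc, max_eq_right hx.le]
      · simp [S, hx, hsucc, hτf, max_eq_left (not_lt.1 hx)]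

theorem tendsto_partialSups_apply_of_iSup_eq {X : Type*} {f : ℕ → X → ℝ} {g : X → ℝ}
    (hle : ∀ k, f k ≤ g) (hsup : ⨆ k, f k = g) (x : X) :
    Tendsto (fun K => partialSups f K x) atTop (𝓝 (g x)) := by
  have hlub : IsLUB (range fun k => f k x) (g x) := by
    have hgx : g x = ⨆ k, f k x := by rw [← iSup_apply, hsup]
    rw [hgx]
    exact isLUB_ciSup ⟨g x, forall_mem_range.2 fun k => hle k x⟩
  simp_rw [Pi.partialSups_apply]
  exact tendsto_atTop_isLUB (partialSups_monotone _) (by rwa [IsLUB, upperBounds_range_partialSups])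

theorem ContinuousLinearMap.apply_eq_dotProduct {ι : Type*} [Fintype ι] [DecidableEq ι]
    (ℓ : (ι → ℝ) →L[ℝ] ℝ) (z : ι → ℝ) : ℓ z = (fun i => ℓ (Pi.single i 1)) ⬝ᵥ z := by
  conv_lhs => rw [← Finset.univ_sum_single z]
  refine (map_sum ℓ _ _).trans (Finset.sum_congr rfl fun i _ => ?_)
  rw [show Pi.single i (z i) = z i • (Pi.single i 1 : ι → ℝ) by simp [← Pi.single_smul'],
    map_smul, smul_eq_mul, mul_comm]

section WeakL1

variable {Ω ι : Type*} [MeasurableSpace Ω] [Fintype ι] {μ : Measure Ω}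
  {v : ℕ → Ω → ι → ℝ} {vlim : Ω → ι → ℝ}

theorem MeasureTheory.Integrable.dotProduct_of_bounded {φ u : Ω → ι → ℝ} (hu : Integrable u μ)
    (hφ : AEStronglyMeasurable φ μ) {M : ℝ} (hφM : ∀ᵐ x ∂μ, ‖φ x‖ ≤ M) :
    Integrable (fun x => φ x ⬝ᵥ u x) μ := by
  refine integrable_finsetSum _ fun i _ =>
    (hu.eval i).bdd_mul (c := M) ((continuous_apply i).comp_aestronglyMeasurable hφ) ?_
  filter_upwards [hφM] with x hx using (norm_le_pi_norm (φ x) i).trans hx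

def TendstoWeakL1 (μ : Measure Ω) (v : ℕ → Ω → ι → ℝ) (vlim : Ω → ι → ℝ) : Prop :=
  ∀ φ : Ω → ι → ℝ, Measurable φ → (∃ M : ℝ, ∀ᵐ x ∂μ, ‖φ x‖ ≤ M) →
    Tendsto (fun n => ∫ x, φ x ⬝ᵥ v n x ∂μ) atTop (𝓝 (∫ x, φ x ⬝ᵥ vlim x ∂μ))

theorem TendstoWeakL1.of_aestronglyMeasurable (hweak : TendstoWeakL1 μ v vlim)
    {φ : Ω → ι → ℝ} (hφ : AEStronglyMeasurable φ μ) {M : ℝ} (hφM : ∀ᵐ x ∂μ, ‖φ x‖ ≤ M) :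
    Tendsto (fun n => ∫ x, φ x ⬝ᵥ v n x ∂μ) atTop (𝓝 (∫ x, φ x ⬝ᵥ vlim x ∂μ)) := by
  have hmk : ∀ u : Ω → ι → ℝ, ∫ x, φ x ⬝ᵥ u x ∂μ = ∫ x, hφ.mk φ x ⬝ᵥ u x ∂μ := fun u =>
    integral_congr_ae (hφ.ae_eq_mk.mono fun x hx => by simp only [hx])
  simp_rw [hmk]
  refine hweak _ hφ.stronglyMeasurable_mk.measurable ⟨M, ?_⟩
  filter_upwards [hφM, hφ.ae_eq_mk] with x hx hmx using hmx ▸ hx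

variable [IsFiniteMeasure μ] {g : (ι → ℝ) → ℝ}

theorem TendstoWeakL1.tendsto_integral_affine (hweak : TendstoWeakL1 μ v vlim)
    (hv : ∀ n, Integrable (v n) μ) (hvlim : Integrable vlim μ)
    {φ : Ω → ι → ℝ} {c : Ω → ℝ} (hφ : AEStronglyMeasurable φ μ) (hc : AEStronglyMeasurable c μ)
    {M : ℝ} (hφM : ∀ᵐ x ∂μ, ‖φ x‖ ≤ M) (hcM : ∀ᵐ x ∂μ, ‖c x‖ ≤ M) :
    Tendsto (fun n => ∫ x, φ x ⬝ᵥ v n x + c x ∂μ) atTop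
      (𝓝 (∫ x, φ x ⬝ᵥ vlim x + c x ∂μ)) := by
  have hc_int : Integrable c μ := (integrable_const M).mono' hc hcM
  simp_rw [integral_add ((hv _).dotProduct_of_bounded hφ hφM) hc_int,
    integral_add (hvlim.dotProduct_of_bounded hφ hφM) hc_int]
  exact (hweak.of_aestronglyMeasurable hφ hφM).add_const _

theorem TendstoWeakL1.lintegral_ofReal_affine_le_liminf_of_nonneg
    (hweak : TendstoWeakL1 μ v vlim) (hv : ∀ n, Integrable (v n) μ) (hvlim : Integrable vlim μ)
    {φ : Ω → ι → ℝ} {c : Ω → ℝ} (hφ : AEStronglyMeasurable φ μ) (hc : AEStronglyMeasurable c μ)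
    {M : ℝ} (hφM : ∀ᵐ x ∂μ, ‖φ x‖ ≤ M) (hcM : ∀ᵐ x ∂μ, ‖c x‖ ≤ M)
    (hle : ∀ x z, ENNReal.ofReal (φ x ⬝ᵥ z + c x) ≤ ENNReal.ofReal (g z))
    (hnonneg : 0 ≤ᵐ[μ] fun x => φ x ⬝ᵥ vlim x + c x) :
    ∫⁻ x, ENNReal.ofReal (φ x ⬝ᵥ vlim x + c x) ∂μ ≤
      atTop.liminf fun n => ∫⁻ x, ENNReal.ofReal (g (v n x)) ∂μ := by
  have hint : ∀ u : Ω → ι → ℝ, Integrable u μ → Integrable (fun x => φ x ⬝ᵥ u x + c x) μ :=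
    fun u hu => (hu.dotProduct_of_bounded hφ hφM).add ((integrable_const M).mono' hc hcM)
  exact lintegral_ofReal_le_liminf_of_tendsto_integral (fun n => hint _ (hv n)) (hint _ hvlim)
    hnonneg (fun n => Eventually.of_forall fun x => hle x (v n x))
    (hweak.tendsto_integral_affine hv hvlim hφ hc hφM hcM)

theorem TendstoWeakL1.lintegral_ofReal_affine_le_liminf (hweak : TendstoWeakL1 μ v vlim)
    (hv : ∀ n, Integrable (v n) μ) (hvlim : Integrable vlim μ) {φ : Ω → ι → ℝ} {c : Ω → ℝ}
    (hφ : AEStronglyMeasurable φ μ) (hc : AEStronglyMeasurable c μ) {M : ℝ}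
    (hφM : ∀ᵐ x ∂μ, ‖φ x‖ ≤ M) (hcM : ∀ᵐ x ∂μ, ‖c x‖ ≤ M) (hle : ∀ x z, φ x ⬝ᵥ z + c x ≤ g z) :
    ∫⁻ x, ENNReal.ofReal (φ x ⬝ᵥ vlim x + c x) ∂μ ≤
      atTop.liminf fun n => ∫⁻ x, ENNReal.ofReal (g (v n x)) ∂μ := by
  -- Cutting `φ` and `c` off where `φ · vlim + c < 0` leaves the left side unchanged and makes
  -- the limit integrand nonnegative.
  set S := {x | 0 ≤ φ x ⬝ᵥ vlim x + c x}
  have hS : NullMeasurableSet S μ := nullMeasurableSet_le aemeasurable_const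
    ((hvlim.dotProduct_of_bounded hφ hφM).add ((integrable_const M).mono' hc hcM)).aemeasurable
  have hind : ∀ (u : Ω → ι → ℝ) x,
      S.indicator φ x ⬝ᵥ u x + S.indicator c x = S.indicator (fun x => φ x ⬝ᵥ u x + c x) x := by
    intro u x
    by_cases hx : x ∈ S <;> simp [hx]
  have hcut : ∀ x, ENNReal.ofReal (S.indicator (fun x => φ x ⬝ᵥ vlim x + c x) x) =
      ENNReal.ofReal (φ x ⬝ᵥ vlim x + c x) := by
    intro x
    by_cases hx : x ∈ S
    · simp [hx]
    · simp [hx, ENNReal.ofReal_of_nonpos (le_of_not_ge hx)]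
  simp_rw [← hcut, ← hind]
  refine hweak.lintegral_ofReal_affine_le_liminf_of_nonneg hv hvlim (hφ.indicator₀ hS)
    (hc.indicator₀ hS) (hφM.mono fun x hx => (norm_indicator_le_norm_self _ _).trans hx)
    (hcM.mono fun x hx => (norm_indicator_le_norm_self _ _).trans hx) (fun x z => ?_)
    (Eventually.of_forall fun x => ?_)
  · rw [hind (fun _ => z)]
    by_cases hx : x ∈ S
    · simpa [hx] using ENNReal.ofReal_le_ofReal (hle x z)
    · simp [hx]
  · simp only [Pi.zero_apply, hind]
    exact indicator_nonneg (fun _ hx => hx) x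

theorem TendstoWeakL1.lintegral_ofReal_partialSups_le_liminf [DecidableEq ι]
    (hweak : TendstoWeakL1 μ v vlim) (hv : ∀ n, Integrable (v n) μ) (hvlim : Integrable vlim μ)
    {l : ℕ → (ι → ℝ) →L[ℝ] ℝ} {c : ℕ → ℝ} (hle : ∀ k, ⇑(l k) + const (ι → ℝ) (c k) ≤ g)
    (K : ℕ) :
    ∫⁻ x, ENNReal.ofReal (partialSups (fun k => ⇑(l k) + const (ι → ℝ) (c k)) K (vlim x)) ∂μ ≤
      atTop.liminf fun n => ∫⁻ x, ENNReal.ofReal (g (v n x)) ∂μ := by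
  obtain ⟨τ, hτ, hτK, hτmax⟩ := exists_measurable_eq_partialSups
    (f := fun k => ⇑(l k) + const (ι → ℝ) (c k))
    (fun k => ((l k).continuous.add continuous_const).measurable) K
  set M := ∑ k ∈ Finset.range (K + 1), (‖fun i => l k (Pi.single i 1)‖ + ‖c k‖)
  have hM : ∀ x, ‖fun i => l (τ (vlim x)) (Pi.single i 1)‖ + ‖c (τ (vlim x))‖ ≤ M := fun x =>
    Finset.single_le_sum (f := fun k => ‖fun i => l k (Pi.single i 1)‖ + ‖c k‖)
      (fun _ _ => by positivity) (Finset.mem_range.2 (Nat.lt_succ_of_le (hτK _)))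
  have hτv : AEMeasurable (fun x => τ (vlim x)) μ := hτ.comp_aemeasurable hvlim.aemeasurable
  have hsel := hweak.lintegral_ofReal_affine_le_liminf hv hvlim
    (φ := fun x i => l (τ (vlim x)) (Pi.single i 1)) (c := fun x => c (τ (vlim x)))
    ((measurable_from_nat (f := fun k i => l k (Pi.single i 1))).comp_aemeasurable hτv
      ).aestronglyMeasurable
    ((measurable_from_nat (f := c)).comp_aemeasurable hτv).aestronglyMeasurable
    (Eventually.of_forall fun x => (le_add_of_nonneg_right (norm_nonneg _)).trans (hM x))
    (Eventually.of_forall fun x => (le_add_of_nonneg_left (norm_nonneg _)).trans (hM x))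
    (fun x z => by rw [← ContinuousLinearMap.apply_eq_dotProduct]; exact hle _ z)
  refine (le_of_eq (lintegral_congr fun x => ?_)).trans hsel
  rw [← hτmax, Pi.add_apply, const_apply, ContinuousLinearMap.apply_eq_dotProduct]

end WeakL1

theorem lsc_convex_integral_weak_L1_general {Ω : Type*} [MeasurableSpace Ω] (μ : Measure Ω)
    [IsFiniteMeasure μ] {m : ℕ}
    (g : (Fin m → ℝ) → ℝ) (hg_convex : ConvexOn ℝ Set.univ g)
    (v : ℕ → Ω → (Fin m → ℝ)) (vlim : Ω → (Fin m → ℝ))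
    (hv_int : ∀ n, Integrable (v n) μ) (hvlim_int : Integrable vlim μ)
    (hweak : ∀ φ : Ω → (Fin m → ℝ), Measurable φ → (∃ M : ℝ, ∀ᵐ x ∂μ, ‖φ x‖ ≤ M) →
      Tendsto (fun n => ∫ x, ∑ i, φ x i * v n x i ∂μ) atTop
        (𝓝 (∫ x, ∑ i, φ x i * vlim x i ∂μ))) :
    ∫⁻ x, ENNReal.ofReal (g (vlim x)) ∂μ ≤
      atTop.liminf (fun n => ∫⁻ x, ENNReal.ofReal (g (v n x)) ∂μ) := by
  obtain ⟨l, c, hle, hsup⟩ := hg_convex.real_univ_sSup_of_nat_affine_eq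
    hg_convex.locallyLipschitz.continuous.lowerSemicontinuous
  have hcont : ∀ k, Continuous (⇑(l k) + const _ (c k)) := fun k =>
    (l k).continuous.add continuous_const
  refine le_of_tendsto' (lintegral_tendsto_of_tendsto_of_monotone (fun K => ?_)
      (Eventually.of_forall fun x K K' hKK' => ?_) (Eventually.of_forall fun x => ?_))
    (TendstoWeakL1.lintegral_ofReal_partialSups_le_liminf hweak hv_int hvlim_int hle)
  · exact (ENNReal.measurable_ofReal.comp (Measurable.partialSups (fun k => (hcont k).measurable) K)
      ).comp_aemeasurable hvlim_int.aemeasurable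
  · exact ENNReal.ofReal_le_ofReal (Pi.le_def.1 (partialSups_monotone _ hKK') _)
  · exact ENNReal.tendsto_ofReal (tendsto_partialSups_apply_of_iSup_eq hle hsup _)

/-- Sequential weak `L¹` lower semicontinuity of convex integral functionals: if `vₙ → v`
weakly in `L¹(μ; ℝ^m)` and `g : ℝ^m → [0,∞)` is convex, then
`∫ g(v) dμ ≤ liminf ∫ g(vₙ) dμ`. -/
theorem lsc_convex_integral_weak_L1 {Ω : Type*} [MeasurableSpace Ω] (μ : Measure Ω)
    [IsFiniteMeasure μ] {m : ℕ}
    (g : (Fin m → ℝ) → ℝ) (hg_nonneg : ∀ z, 0 ≤ g z) (hg_convex : ConvexOn ℝ Set.univ g)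
    (v : ℕ → Ω → (Fin m → ℝ)) (vlim : Ω → (Fin m → ℝ))
    (hv_int : ∀ n, Integrable (v n) μ) (hvlim_int : Integrable vlim μ)
    (hweak : ∀ φ : Ω → (Fin m → ℝ), Measurable φ → (∃ M : ℝ, ∀ᵐ x ∂μ, ‖φ x‖ ≤ M) →
      Tendsto (fun n => ∫ x, ∑ i, φ x i * v n x i ∂μ) atTop
        (𝓝 (∫ x, ∑ i, φ x i * vlim x i ∂μ))) :
    ∫⁻ x, ENNReal.ofReal (g (vlim x)) ∂μ ≤
      atTop.liminf (fun n => ∫⁻ x, ENNReal.ofReal (g (v n x)) ∂μ) :=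
  lsc_convex_integral_weak_L1_general μ g hg_convex v vlim hv_int hvlim_int hweak
end
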